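/- arXiv:math/0610926 — 10 statements merged into one kernel-verified Lean document; each statement's English description precedes it below -/
import Mathlib

section
/- Let d, a : ℝ → ℝ be continuous ω-periodic functions with d(t) ≥ δ > 0, and g : ℝ → ℝ satisfy |g(s)| ≤ G|s| + C with G, C ≥ 0. If for all t, -d(t) + G|a(t)| < -η for some η > 0, then any solution u of u'(t) = -d(t)u(t) + a(t)g(u(t)) + I(t), where I is continuous ω-periodic with |I(t)| ≤ J₀, satisfies: if |u(0)| ≤ M for M > (J₀ + |a|∞ C)/η, then |u(t)| ≤ M for all t ≥ 0. -/
/-- forward invariance of the ball of radius M for the scalar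
periodic ODE u' = -d(t)u + a(t)g(u) + I(t). -/
theorem stmt0 (ω δ G C η J₀ A₀ M : ℝ) (d a I g u : ℝ → ℝ)
    (hω : 0 < ω) (hd : Continuous d) (ha : Continuous a) (hI : Continuous I)
    (hdper : Function.Periodic d ω) (haper : Function.Periodic a ω)
    (hIper : Function.Periodic I ω)
    (hδ : 0 < δ) (hdδ : ∀ t, δ ≤ d t)
    (hG : 0 ≤ G) (hC : 0 ≤ C) (hg : ∀ s, |g s| ≤ G * |s| + C)
    (hη : 0 < η) (hstab : ∀ t, -d t + G * |a t| < -η)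
    (hJ₀ : ∀ t, |I t| ≤ J₀) (hA₀ : ∀ t, |a t| ≤ A₀)
    (hM : (J₀ + A₀ * C) / η < M)
    (hu : ∀ t, HasDerivAt u (-d t * u t + a t * g (u t) + I t) t)
    (hu0 : |u 0| ≤ M) :
    ∀ t ≥ (0 : ℝ), |u t| ≤ M := by
  have hJ0 : 0 ≤ J₀ := le_trans (abs_nonneg _) (hJ₀ 0)
  have hA0 : 0 ≤ A₀ := le_trans (abs_nonneg _) (hA₀ 0)
  have hB0 : (0:ℝ) ≤ J₀ + A₀ * C := by positivity
  have hMpos : 0 < M := lt_of_le_of_lt (div_nonneg hB0 hη.le) hM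
  have hηM : J₀ + A₀ * C < η * M := by
    rw [div_lt_iff₀ hη] at hM; linarith
  set F : ℝ → ℝ := fun x => -d x * u x + a x * g (u x) + I x with hF
  set f' : ℝ → ℝ := fun x => if u x = 0 then |F x| else (SignType.sign (u x) : ℝ) * F x
    with hf'def
  have ucont : Continuous u := by
    rw [continuous_iff_continuousAt]; exact fun x => (hu x).continuousAt
  -- the right slope of |u| tends to f' x
  have hslope : ∀ x : ℝ, Filter.Tendsto (slope (fun s => |u s|) x) (nhdsWithin x (Set.Ioi x))
      (nhds (f' x)) := by
    intro x
    have hmono : nhdsWithin x (Set.Ioi x) ≤ nhdsWithin x {x}ᶜ :=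
      nhdsWithin_mono x (fun y hy => ne_of_gt hy)
    by_cases h0 : u x = 0
    · have h1 : Filter.Tendsto (slope u x) (nhdsWithin x (Set.Ioi x)) (nhds (F x)) :=
        ((hasDerivAt_iff_tendsto_slope).mp (hu x)).mono_left hmono
      have h2 : Filter.Tendsto (fun z => |slope u x z|) (nhdsWithin x (Set.Ioi x))
          (nhds |F x|) := (continuous_abs.tendsto _).comp h1
      have heq : ∀ᶠ z in nhdsWithin x (Set.Ioi x),
          |slope u x z| = slope (fun s => |u s|) x z := by
        filter_upwards [self_mem_nhdsWithin] with z hz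
        have hzx : (0:ℝ) < z - x := sub_pos.mpr hz
        simp only [slope_def_field, h0, abs_zero, sub_zero, div_eq_mul_inv, abs_mul,
          abs_of_pos (inv_pos.mpr hzx)]
      have := h2.congr' heq
      simpa [hf'def, h0] using this
    · have habs : HasDerivAt (fun s => |u s|)
          ((SignType.sign (u x) : ℝ) * F x) x := by
        simpa [hF, Function.comp_def, neg_mul] using (hasDerivAt_abs h0).comp x (hu x)
      have h1 := ((hasDerivAt_iff_tendsto_slope).mp habs).mono_left hmono
      rw [hf'def]; simp only [if_neg h0]; exact h1
  intro t ht
  have key : ∀ ⦃x⦄, x ∈ Set.Icc (0:ℝ) t → |u x| ≤ (fun _ : ℝ => M) x := by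
    apply image_le_of_liminf_slope_right_lt_deriv_boundary
      (f := fun s => |u s|) (f' := f') (B := fun _ => M) (B' := fun _ => 0)
    · exact (ucont.abs).continuousOn
    · intro x hx r hr
      exact ((hslope x).eventually_lt_const hr).frequently
    · exact hu0
    · exact fun x => hasDerivAt_const x M
    · intro x hx hfx
      have h0 : u x ≠ 0 := by
        intro h; rw [h, abs_zero] at hfx; exact hMpos.ne hfx
      have habs : |u x| = M := hfx
      have hgb : |a x * g (u x)| ≤ A₀ * C + G * |a x| * M := by
        rw [abs_mul]
        calc |a x| * |g (u x)| ≤ |a x| * (G * |u x| + C) :=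
              mul_le_mul_of_nonneg_left (hg (u x)) (abs_nonneg _)
          _ = |a x| * G * M + |a x| * C := by rw [habs]; ring
          _ ≤ A₀ * C + G * |a x| * M := by
              have := mul_le_mul_of_nonneg_right (hA₀ x) hC
              nlinarith [abs_nonneg (a x)]
      have hkey : (SignType.sign (u x) : ℝ) * F x < 0 := by
        have hsu : (SignType.sign (u x) : ℝ) * u x = |u x| := by
          rcases h0.lt_or_gt with h | h
          · rw [sign_neg h, abs_of_neg h]; simp
          · rw [sign_pos h, abs_of_pos h]; simp
        have hsb : |(SignType.sign (u x) : ℝ)| ≤ 1 := by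
          rcases h0.lt_or_gt with h | h
          · rw [sign_neg h]; simp
          · rw [sign_pos h]; simp
        have hexp : (SignType.sign (u x) : ℝ) * F x
            = -d x * M + (SignType.sign (u x) : ℝ) * (a x * g (u x) + I x) := by
          rw [hF]
          have : (SignType.sign (u x) : ℝ) * (-d x * u x) = -d x * M := by
            rw [show (SignType.sign (u x) : ℝ) * (-d x * u x)
                = -d x * ((SignType.sign (u x) : ℝ) * u x) by ring, hsu, habs]
          calc (SignType.sign (u x) : ℝ) * (-d x * u x + a x * g (u x) + I x)
              = (SignType.sign (u x) : ℝ) * (-d x * u x)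
                + (SignType.sign (u x) : ℝ) * (a x * g (u x) + I x) := by ring
            _ = -d x * M + (SignType.sign (u x) : ℝ) * (a x * g (u x) + I x) := by rw [this]
        rw [hexp]
        have h2 : (SignType.sign (u x) : ℝ) * (a x * g (u x) + I x)
            ≤ |a x * g (u x) + I x| := by
          calc (SignType.sign (u x) : ℝ) * (a x * g (u x) + I x)
              ≤ |(SignType.sign (u x) : ℝ) * (a x * g (u x) + I x)| := le_abs_self _
            _ = |(SignType.sign (u x) : ℝ)| * |a x * g (u x) + I x| := abs_mul _ _
            _ ≤ 1 * |a x * g (u x) + I x| :=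
                mul_le_mul_of_nonneg_right hsb (abs_nonneg _)
            _ = |a x * g (u x) + I x| := one_mul _
        have h3 : |a x * g (u x) + I x| ≤ A₀ * C + G * |a x| * M + J₀ :=
          (abs_add_le _ _).trans (add_le_add hgb (hJ₀ x))
        have h4 : G * |a x| < d x - η := by have := hstab x; linarith
        nlinarith [hMpos]
      rw [hf'def]
      simp only [if_neg h0]
      exact hkey
  exact key ⟨ht, le_rfl⟩
end

section
/- Let d, a, I : ℝ → ℝ be continuous ω-periodic functions with d(t) > 0, g : ℝ → ℝ Lipschitz with constant G, and suppose there exists α > 0 such that -(d(t) - α) + G|a(t)| ≤ 0 for all t. Then any two solutions u, v of u'(t) = -d(t)u(t) + a(t)g(u(t)) + I(t) satisfy |u(t) - v(t)| ≤ e^{-α t}|u(0) - v(0)| for all t ≥ 0. -/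
/-!
The difference `w = u - v` satisfies `w * w' ≤ -α * w ^ 2`, because the Lipschitz bound on `g`
lets the coupling term `a (g u - g v)` be absorbed into the damping `-d w` by the stability
condition. Then `(e^{α t} w t)^2` has nonpositive derivative, so it never exceeds `w 0 ^ 2`.
-/

open Real

lemma sub_mul_damped_lipschitz_le {g : ℝ → ℝ} {G : ℝ} (hg : ∀ x y, |g x - g y| ≤ G * |x - y|)
    (δ c x y : ℝ) :
    (x - y) * (-δ * (x - y) + c * (g x - g y)) ≤ (-δ + G * |c|) * (x - y) ^ 2 := by
  have hcoupling : (x - y) * (c * (g x - g y)) ≤ G * |c| * (x - y) ^ 2 :=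
    calc (x - y) * (c * (g x - g y)) ≤ |x - y| * (|c| * |g x - g y|) := by
          rw [← abs_mul, ← abs_mul]; exact le_abs_self _
      _ ≤ |x - y| * (|c| * (G * |x - y|)) := by gcongr; exact hg x y
      _ = G * |c| * (x - y) ^ 2 := by rw [← sq_abs (x - y)]; ring
  linarith

lemma antitone_sq_exp_mul_of_mul_deriv_le {w w' : ℝ → ℝ} {α : ℝ}
    (hw : ∀ s, HasDerivAt w (w' s) s) (hcontr : ∀ s, w s * w' s ≤ -α * w s ^ 2) :
    Antitone fun s => (exp (α * s) * w s) ^ 2 := by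
  refine antitone_of_hasDerivAt_nonpos
    (f' := fun s => 2 * exp (α * s) ^ 2 * (α * w s ^ 2 + w s * w' s)) (fun s => ?_) (fun s => ?_)
  · refine ((((hasDerivAt_id s).const_mul α).exp.mul (hw s)).pow 2).congr_deriv ?_
    simp only [Pi.mul_apply, id, mul_one, Nat.cast_ofNat]
    ring
  · have hexp : 0 ≤ 2 * exp (α * s) ^ 2 := by positivity
    exact mul_nonpos_of_nonneg_of_nonpos hexp (by linarith [hcontr s])

lemma abs_le_exp_neg_mul_abs_of_mul_deriv_le {w w' : ℝ → ℝ} {α : ℝ}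
    (hw : ∀ s, HasDerivAt w (w' s) s) (hcontr : ∀ s, w s * w' s ≤ -α * w s ^ 2)
    {t : ℝ} (ht : 0 ≤ t) :
    |w t| ≤ exp (-α * t) * |w 0| := by
  have hsq : (exp (α * t) * w t) ^ 2 ≤ (exp (α * 0) * w 0) ^ 2 :=
    antitone_sq_exp_mul_of_mul_deriv_le hw hcontr ht
  rw [mul_zero, exp_zero, one_mul] at hsq
  have habs : exp (α * t) * |w t| ≤ |w 0| := by
    simpa [abs_mul, abs_of_pos (exp_pos _)] using sq_le_sq.mp hsq
  calc |w t| = exp (-α * t) * (exp (α * t) * |w t|) := by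
        rw [← mul_assoc, ← exp_add, neg_mul, neg_add_cancel, exp_zero, one_mul]
    _ ≤ exp (-α * t) * |w 0| := by gcongr

theorem stmt2_general (G α : ℝ) (d a I g u v : ℝ → ℝ)
    (hg : ∀ x y, |g x - g y| ≤ G * |x - y|)
    (hstab : ∀ t, -(d t - α) + G * |a t| ≤ 0)
    (hu : ∀ t, HasDerivAt u (-d t * u t + a t * g (u t) + I t) t)
    (hv : ∀ t, HasDerivAt v (-d t * v t + a t * g (v t) + I t) t) :
    ∀ t ≥ (0 : ℝ), |u t - v t| ≤ Real.exp (-α * t) * |u 0 - v 0| := by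
  intro t ht
  have hdiff : ∀ s, HasDerivAt (fun s => u s - v s)
      (-d s * (u s - v s) + a s * (g (u s) - g (v s))) s := fun s =>
    ((hu s).sub (hv s)).congr_deriv (by ring)
  refine abs_le_exp_neg_mul_abs_of_mul_deriv_le hdiff (fun s => ?_) ht
  have hdamp : -d s + G * |a s| ≤ -α := by linarith [hstab s]
  calc (u s - v s) * (-d s * (u s - v s) + a s * (g (u s) - g (v s)))
      ≤ (-d s + G * |a s|) * (u s - v s) ^ 2 := sub_mul_damped_lipschitz_le hg _ _ _ _
    _ ≤ -α * (u s - v s) ^ 2 := by gcongr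

/-- exponential contraction of any two solutions of the scalar
periodic ODE u' = -d(t)u + a(t)g(u) + I(t). -/
theorem stmt2 (ω G α : ℝ) (d a I g u v : ℝ → ℝ)
    (hω : 0 < ω) (hd : Continuous d) (ha : Continuous a) (hI : Continuous I)
    (hdper : Function.Periodic d ω) (haper : Function.Periodic a ω)
    (hIper : Function.Periodic I ω)
    (hdpos : ∀ t, 0 < d t)
    (hg : ∀ x y, |g x - g y| ≤ G * |x - y|)
    (hα : 0 < α) (hstab : ∀ t, -(d t - α) + G * |a t| ≤ 0)
    (hu : ∀ t, HasDerivAt u (-d t * u t + a t * g (u t) + I t) t)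
    (hv : ∀ t, HasDerivAt v (-d t * v t + a t * g (v t) + I t) t) :
    ∀ t ≥ (0 : ℝ), |u t - v t| ≤ Real.exp (-α * t) * |u 0 - v 0| :=
  stmt2_general G α d a I g u v hg hstab hu hv
end

section
/- Let d, a, I be continuous ω-periodic real functions with d(t) > 0, g Lipschitz with constant G, and suppose there exists α > 0 with -(d(t) - α) + G|a(t)| ≤ 0 for all t. If x is an ω-periodic solution of u' = -d(t)u + a(t)g(u) + I(t), then x is the unique ω-periodic solution, and every solution u satisfies u(t) - x(t) → 0 exponentially as t → ∞. -/
/-! Along the difference `v = u - x` of two solutions, the Lipschitz bound on `g` and the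
stability condition give `v v' ≤ -α v²`, so `v² e^{2αt}` is antitone and
`|v t| ≤ |v 0| e^{-αt}`. The difference of two periodic solutions is periodic and tends
to `0`, hence vanishes. -/

open Real Filter Topology

theorem Function.Periodic.eq_of_tendsto_atTop {E : Type*} [TopologicalSpace E] [T2Space E]
    {f : ℝ → E} {c : ℝ} {L : E} (hf : Function.Periodic f c) (hc : 0 < c)
    (hlim : Tendsto f atTop (𝓝 L)) (t : ℝ) : f t = L := by
  have hshift : Tendsto (fun n : ℕ => t + n * c) atTop atTop :=
    tendsto_atTop_add_const_left _ _ (tendsto_natCast_atTop_atTop.atTop_mul_const hc)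
  have hconst : (fun n : ℕ => f (t + n * c)) = fun _ => f t :=
    funext fun n => hf.nat_mul n t
  have := hlim.comp hshift
  rw [Function.comp_def, hconst] at this
  exact tendsto_nhds_unique tendsto_const_nhds this

theorem tendsto_zero_of_abs_le_mul_exp {v : ℝ → ℝ} {K α : ℝ} (hα : 0 < α)
    (hv : ∀ t ≥ (0 : ℝ), |v t| ≤ K * exp (-α * t)) : Tendsto v atTop (𝓝 0) := by
  have hexp : Tendsto (fun t => K * exp (-α * t)) atTop (𝓝 0) := by
    simpa [neg_mul] using
      (tendsto_exp_neg_atTop_nhds_zero.comp (tendsto_id.const_mul_atTop hα)).const_mul K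
  refine squeeze_zero_norm' ?_ hexp
  filter_upwards [eventually_ge_atTop 0] with t ht
  exact hv t ht

theorem antitone_sq_mul_exp_of_mul_deriv_le {v v' : ℝ → ℝ} {α : ℝ}
    (hv : ∀ t, HasDerivAt v (v' t) t) (hdecay : ∀ t, v t * v' t ≤ -α * v t ^ 2) :
    Antitone fun t => v t ^ 2 * exp (2 * α * t) := by
  have hderiv : ∀ t, HasDerivAt (fun t => v t ^ 2 * exp (2 * α * t))
      ((2 * (v t * v' t) + 2 * α * v t ^ 2) * exp (2 * α * t)) t := by
    intro t
    have hexp : HasDerivAt (fun t => exp (2 * α * t)) (exp (2 * α * t) * (2 * α)) t := by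
      simpa using ((hasDerivAt_id t).const_mul (2 * α)).exp
    exact (((hv t).fun_pow 2).fun_mul hexp).congr_deriv (by push_cast; ring)
  refine antitone_of_deriv_nonpos (fun t => (hderiv t).differentiableAt) fun t => ?_
  rw [(hderiv t).deriv]
  exact mul_nonpos_of_nonpos_of_nonneg (by linarith [hdecay t]) (exp_pos _).le

theorem abs_le_abs_mul_exp_of_mul_deriv_le {v v' : ℝ → ℝ} {α : ℝ}
    (hv : ∀ t, HasDerivAt v (v' t) t) (hdecay : ∀ t, v t * v' t ≤ -α * v t ^ 2)
    {t : ℝ} (ht : 0 ≤ t) : |v t| ≤ |v 0| * exp (-α * t) := by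
  have hanti := antitone_sq_mul_exp_of_mul_deriv_le hv hdecay ht
  simp only [mul_zero, exp_zero, mul_one] at hanti
  have hsq : exp (-α * t) ^ 2 * exp (2 * α * t) = 1 := by
    rw [← exp_nat_mul, ← exp_add, ← exp_zero]
    congr 1
    push_cast
    ring
  rw [← sq_le_sq₀ (abs_nonneg _) (by positivity), sq_abs, mul_pow, sq_abs]
  nlinarith [exp_pos (2 * α * t), sq_nonneg (exp (-α * t)), sq_nonneg (v 0)]

section LipschitzScalarODE

variable {G α : ℝ} {d a I g x u : ℝ → ℝ}

theorem sub_mul_deriv_sub_le (hg : ∀ p q, |g p - g q| ≤ G * |p - q|)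
    (hstab : ∀ t, -(d t - α) + G * |a t| ≤ 0) (t : ℝ) :
    (u t - x t) * (-d t * (u t - x t) + a t * (g (u t) - g (x t))) ≤ -α * (u t - x t) ^ 2 := by
  set v := u t - x t
  have hnonlin : v * (a t * (g (u t) - g (x t))) ≤ G * |a t| * v ^ 2 :=
    calc v * (a t * (g (u t) - g (x t)))
        ≤ |v| * (|a t| * |g (u t) - g (x t)|) := by
          rw [← abs_mul, ← abs_mul]; exact le_abs_self _
      _ ≤ |v| * (|a t| * (G * |v|)) := by gcongr; exact hg _ _
      _ = G * |a t| * v ^ 2 := by rw [← sq_abs v]; ring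
  nlinarith [mul_nonneg (sq_nonneg v) (neg_nonneg.mpr (hstab t))]

theorem abs_sub_le_mul_exp_of_solutions (hg : ∀ p q, |g p - g q| ≤ G * |p - q|)
    (hstab : ∀ t, -(d t - α) + G * |a t| ≤ 0)
    (hx : ∀ t, HasDerivAt x (-d t * x t + a t * g (x t) + I t) t)
    (hu : ∀ t, HasDerivAt u (-d t * u t + a t * g (u t) + I t) t)
    {t : ℝ} (ht : 0 ≤ t) : |u t - x t| ≤ |u 0 - x 0| * exp (-α * t) := by
  have hdiff : ∀ t, HasDerivAt (fun t => u t - x t)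
      (-d t * (u t - x t) + a t * (g (u t) - g (x t))) t := fun t =>
    ((hu t).sub (hx t)).congr_deriv (by ring)
  exact abs_le_abs_mul_exp_of_mul_deriv_le hdiff (sub_mul_deriv_sub_le hg hstab) ht

end LipschitzScalarODE

theorem stmt3_general (ω G α : ℝ) (d a I g x : ℝ → ℝ)
    (hω : 0 < ω)
    (hg : ∀ p q, |g p - g q| ≤ G * |p - q|)
    (hα : 0 < α) (hstab : ∀ t, -(d t - α) + G * |a t| ≤ 0)
    (hx : ∀ t, HasDerivAt x (-d t * x t + a t * g (x t) + I t) t)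
    (hxper : Function.Periodic x ω) :
    (∀ y : ℝ → ℝ, (∀ t, HasDerivAt y (-d t * y t + a t * g (y t) + I t) t) →
        Function.Periodic y ω → y = x) ∧
    (∀ u : ℝ → ℝ, (∀ t, HasDerivAt u (-d t * u t + a t * g (u t) + I t) t) →
        ∃ K : ℝ, ∀ t ≥ (0 : ℝ), |u t - x t| ≤ K * Real.exp (-α * t)) := by
  refine ⟨fun y hy hyper => ?_,
    fun u hu => ⟨_, fun t ht => abs_sub_le_mul_exp_of_solutions hg hstab hx hu ht⟩⟩
  have hlim : Tendsto (fun t => y t - x t) atTop (𝓝 0) :=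
    tendsto_zero_of_abs_le_mul_exp hα fun t ht => abs_sub_le_mul_exp_of_solutions hg hstab hx hy ht
  funext t
  exact sub_eq_zero.mp ((hyper.sub hxper).eq_of_tendsto_atTop hω hlim t)

/-- uniqueness of the ω-periodic solution and exponential
attraction of all solutions for u' = -d(t)u + a(t)g(u) + I(t). -/
theorem stmt3 (ω G α : ℝ) (d a I g x : ℝ → ℝ)
    (hω : 0 < ω) (hd : Continuous d) (ha : Continuous a) (hI : Continuous I)
    (hdper : Function.Periodic d ω) (haper : Function.Periodic a ω)
    (hIper : Function.Periodic I ω)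
    (hdpos : ∀ t, 0 < d t)
    (hg : ∀ p q, |g p - g q| ≤ G * |p - q|)
    (hα : 0 < α) (hstab : ∀ t, -(d t - α) + G * |a t| ≤ 0)
    (hx : ∀ t, HasDerivAt x (-d t * x t + a t * g (x t) + I t) t)
    (hxper : Function.Periodic x ω) :
    (∀ y : ℝ → ℝ, (∀ t, HasDerivAt y (-d t * y t + a t * g (y t) + I t) t) →
        Function.Periodic y ω → y = x) ∧
    (∀ u : ℝ → ℝ, (∀ t, HasDerivAt u (-d t * u t + a t * g (u t) + I t) t) →
        ∃ K : ℝ, ∀ t ≥ (0 : ℝ), |u t - x t| ≤ K * Real.exp (-α * t)) :=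
  stmt3_general ω G α d a I g x hω hg hα hstab hx hxper
end

section
/- Let D : ℝ → Matrix.diagonal realized by continuous ω-periodic d_i(t) > 0, A : ℝ → ℝ^{n×n} with continuous ω-periodic entries a_{ij}(t), g_j : ℝ → ℝ with |g_j(s)| ≤ G_j|s| + C_j, and I_i continuous ω-periodic. Suppose there exist ξ_1,…,ξ_n > 0 and η > 0 such that for all t and all i: -ξ_i d_i(t) + Σ_j ξ_j G_j |a_{ij}(t)| ≤ -η. Define the weighted norm ‖x‖_ξ = max_i ξ_i^{-1}|x_i|. Then for any M > J/η, where J = max_i sup_t (Σ_j |a_{ij}(t)| C_j + |I_i(t)|), every solution of u_i' = -d_i(t)u_i + Σ_j a_{ij}(t) g_j(u_j) + I_i(t) with ‖u(0)‖_ξ ≤ M satisfies ‖u(t)‖_ξ ≤ M for all t ≥ 0. -/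
open Finset in
/-- forward invariance of the weighted sup-norm ball for the
delay-free n-dimensional periodic system. -/
theorem stmt4 (n : ℕ) (ω η J M : ℝ) (ξ G C : Fin n → ℝ)
    (d : Fin n → ℝ → ℝ) (a : Fin n → Fin n → ℝ → ℝ) (I : Fin n → ℝ → ℝ)
    (g : Fin n → ℝ → ℝ) (u : ℝ → Fin n → ℝ)
    (hω : 0 < ω)
    (hd : ∀ i, Continuous (d i)) (ha : ∀ i j, Continuous (a i j))
    (hI : ∀ i, Continuous (I i))
    (hdper : ∀ i, Function.Periodic (d i) ω)
    (haper : ∀ i j, Function.Periodic (a i j) ω)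
    (hIper : ∀ i, Function.Periodic (I i) ω)
    (hdpos : ∀ i t, 0 < d i t)
    (hξ : ∀ i, 0 < ξ i) (hG : ∀ j, 0 ≤ G j)
    (hg : ∀ j s, |g j s| ≤ G j * |s| + C j)
    (hη : 0 < η)
    (hstab : ∀ i t, -ξ i * d i t + ∑ j, ξ j * G j * |a i j t| ≤ -η)
    (hJ : ∀ i t, (∑ j, |a i j t| * C j) + |I i t| ≤ J)
    (hM : J / η < M)
    (hu : ∀ t i, HasDerivAt (fun s => u s i)
      (-d i t * u t i + (∑ j, a i j t * g j (u t j)) + I i t) t)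
    (hu0 : ∀ i, (ξ i)⁻¹ * |u 0 i| ≤ M) :
    ∀ t ≥ (0 : ℝ), ∀ i, (ξ i)⁻¹ * |u t i| ≤ M := by
  intro t0 ht0 i0
  by_contra hcon
  push_neg at hcon
  -- basic positivity facts
  have hC : ∀ j, 0 ≤ C j := fun j => le_trans (abs_nonneg _) (by simpa using hg j 0)
  have hJ0 : 0 ≤ J := by
    refine le_trans ?_ (hJ i0 0)
    exact add_nonneg (Finset.sum_nonneg fun j _ => mul_nonneg (abs_nonneg _) (hC j))
      (abs_nonneg _)
  have hM0 : 0 < M := lt_of_le_of_lt (div_nonneg hJ0 hη.le) hM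
  set c : ℝ := (M + (ξ i0)⁻¹ * |u t0 i0|) / 2 with hc
  have hMc : M < c := by simp only [hc]; linarith
  have hcf : c < (ξ i0)⁻¹ * |u t0 i0| := by simp only [hc]; linarith
  have hc0 : 0 < c := hM0.trans hMc
  have hcη : J < η * c := by
    have h1 : J < M * η := (div_lt_iff₀ hη).mp hM
    nlinarith
  -- continuity of coordinates
  have hu_cont : ∀ i, Continuous (fun t => u t i) := fun i =>
    Differentiable.continuous (fun t => (hu t i).differentiableAt)
  set f : Fin n → ℝ → ℝ := fun i t => (ξ i)⁻¹ * |u t i| with hf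
  have hf_cont : ∀ i, Continuous (f i) := fun i => continuous_const.mul (hu_cont i).abs
  -- the first-crossing set
  set S : Set ℝ := Set.Icc 0 t0 ∩ ⋃ i, {t | c ≤ f i t} with hS
  have hS_closed : IsClosed S :=
    isClosed_Icc.inter (isClosed_iUnion_of_finite fun i =>
      isClosed_le continuous_const (hf_cont i))
  have hS_ne : S.Nonempty := ⟨t0, ⟨ht0, le_refl t0⟩, Set.mem_iUnion.2 ⟨i0, hcf.le⟩⟩
  have hS_bdd : BddBelow S := ⟨0, fun x hx => hx.1.1⟩
  set T : ℝ := sInf S with hT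
  have hTS : T ∈ S := hS_closed.csInf_mem hS_ne hS_bdd
  obtain ⟨⟨hT0, hTt0⟩, hTmem⟩ := hTS
  obtain ⟨i, hfiT⟩ := Set.mem_iUnion.1 hTmem
  rw [Set.mem_setOf_eq] at hfiT
  have hTpos : 0 < T := by
    rcases hT0.lt_or_eq with h | h
    · exact h
    · exfalso
      rw [← h] at hfiT
      exact absurd hfiT (not_le.mpr (lt_of_le_of_lt (hu0 i) hMc))
  -- strictly below c before time T
  have hlt : ∀ t, 0 ≤ t → t < T → ∀ j, f j t < c := by
    intro t ht htT j
    by_contra h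
    push_neg at h
    have htS : t ∈ S := ⟨⟨ht, htT.le.trans hTt0⟩, Set.mem_iUnion.2 ⟨j, h⟩⟩
    exact absurd (csInf_le hS_bdd htS) (not_le.mpr htT)
  -- at time T all coordinates are ≤ c (left limit)
  have hle : ∀ j, f j T ≤ c := by
    intro j
    have htd : Filter.Tendsto (f j) (nhdsWithin T (Set.Iio T)) (nhds (f j T)) :=
      ((hf_cont j).tendsto T).mono_left nhdsWithin_le_nhds
    refine le_of_tendsto htd ?_
    filter_upwards [Ioo_mem_nhdsLT_of_mem (Set.mem_Ioc.2 ⟨hTpos, le_refl T⟩)] with t ht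
    exact (hlt t ht.1.le ht.2 j).le
  have hfiTc : f i T = c := le_antisymm (hle i) hfiT
  have huT : |u T i| = ξ i * c := by
    have hx := (hξ i).ne'
    have : (ξ i)⁻¹ * |u T i| = c := hfiTc
    field_simp at this
    linarith [this]
  have hune : u T i ≠ 0 := by
    intro h
    rw [h, abs_zero] at huT
    nlinarith [hξ i]
  -- bound |u T j| ≤ ξ j * c
  have huj : ∀ j, |u T j| ≤ ξ j * c := by
    intro j
    have := hle j
    simp only [hf] at this
    have hx := hξ j
    calc |u T j| = ξ j * ((ξ j)⁻¹ * |u T j|) := by field_simp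
    _ ≤ ξ j * c := by nlinarith [abs_nonneg (u T j)]
  -- the drift bound R < 0
  have hRneg : -d i T * (ξ i * c) + (∑ j, |a i j T| * |g j (u T j)|) + |I i T| < 0 := by
    have h1 : ∑ j, |a i j T| * |g j (u T j)|
        ≤ (∑ j, ξ j * G j * |a i j T| * c) + ∑ j, |a i j T| * C j := by
      rw [← Finset.sum_add_distrib]
      refine Finset.sum_le_sum fun j _ => ?_
      have hgj := hg j (u T j)
      have hujj := huj j
      have haj : (0:ℝ) ≤ |a i j T| := abs_nonneg _
      nlinarith [mul_le_mul_of_nonneg_left hgj haj,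
        mul_le_mul_of_nonneg_left hujj (mul_nonneg haj (hG j))]
    have h2 : (-ξ i * d i T + ∑ j, ξ j * G j * |a i j T|) * c ≤ -η * c :=
      mul_le_mul_of_nonneg_right (hstab i T) hc0.le
    have h3 := hJ i T
    have h4 : (∑ j, ξ j * G j * |a i j T| * c) = (∑ j, ξ j * G j * |a i j T|) * c := by
      rw [Finset.sum_mul]
    nlinarith [h1, h2, h3, hcη]
  -- derivative of |u · i| at T, with the bound
  obtain ⟨D', hD', hD'le⟩ : ∃ D', HasDerivAt (fun t => |u t i|) D' T ∧
      D' ≤ -d i T * |u T i| + (∑ j, |a i j T| * |g j (u T j)|) + |I i T| := by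
    have hsum : |(∑ j, a i j T * g j (u T j)) + I i T|
        ≤ (∑ j, |a i j T| * |g j (u T j)|) + |I i T| := by
      refine (abs_add_le _ _).trans (add_le_add ?_ le_rfl)
      refine (Finset.abs_sum_le_sum_abs _ _).trans ?_
      exact le_of_eq (Finset.sum_congr rfl fun j _ => abs_mul _ _)
    rcases lt_or_gt_of_ne hune with hneg | hpos
    · refine ⟨-(-d i T * u T i + (∑ j, a i j T * g j (u T j)) + I i T), ?_, ?_⟩
      · have hev : (fun t => |u t i|) =ᶠ[nhds T] (fun t => -(u t i)) := by
          have hev0 : ∀ᶠ t in nhds T, u t i < 0 :=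
            (hu_cont i).continuousAt.eventually_lt continuousAt_const hneg
          filter_upwards [hev0] with t ht
          exact abs_of_neg ht
        exact HasDerivAt.congr_of_eventuallyEq ((hu T i).neg) hev
      · have h6 : |u T i| = -u T i := abs_of_neg hneg
        have h5 : -((∑ j, a i j T * g j (u T j)) + I i T)
            ≤ (∑ j, |a i j T| * |g j (u T j)|) + |I i T| :=
          (neg_le_abs _).trans hsum
        calc -(-d i T * u T i + (∑ j, a i j T * g j (u T j)) + I i T)
            = -d i T * (-u T i) + -((∑ j, a i j T * g j (u T j)) + I i T) := by ring
        _ ≤ _ := by rw [h6]; linarith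
    · refine ⟨-d i T * u T i + (∑ j, a i j T * g j (u T j)) + I i T, ?_, ?_⟩
      · have hev : (fun t => |u t i|) =ᶠ[nhds T] (fun t => u t i) := by
          have hev0 : ∀ᶠ t in nhds T, 0 < u t i :=
            continuousAt_const.eventually_lt (hu_cont i).continuousAt hpos
          filter_upwards [hev0] with t ht
          exact abs_of_pos ht
        exact HasDerivAt.congr_of_eventuallyEq (hu T i) hev
      · have h6 : |u T i| = u T i := abs_of_pos hpos
        have h5 : ((∑ j, a i j T * g j (u T j)) + I i T)
            ≤ (∑ j, |a i j T| * |g j (u T j)|) + |I i T| :=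
          (le_abs_self _).trans hsum
        calc -d i T * u T i + (∑ j, a i j T * g j (u T j)) + I i T
            = -d i T * u T i + ((∑ j, a i j T * g j (u T j)) + I i T) := by ring
        _ ≤ _ := by rw [h6]; linarith
  -- derivative of f i at T is negative
  have hfd : HasDerivAt (f i) ((ξ i)⁻¹ * D') T := hD'.const_mul _
  have hDneg : (ξ i)⁻¹ * D' < 0 := by
    have : D' < 0 := by rw [huT] at hD'le; exact lt_of_le_of_lt hD'le hRneg
    exact mul_neg_of_pos_of_neg (inv_pos.2 (hξ i)) this
  -- slope contradiction from the left
  have hslope := hasDerivAt_iff_tendsto_slope.mp hfd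
  have hev : ∀ᶠ z in nhdsWithin T {T}ᶜ, slope (f i) T z < 0 :=
    hslope.eventually_lt_const hDneg
  have hmono : nhdsWithin T (Set.Iio T) ≤ nhdsWithin T {T}ᶜ :=
    nhdsWithin_mono T (fun x hx => ne_of_lt hx)
  have hmem : Set.Ioo (0:ℝ) T ∈ nhdsWithin T (Set.Iio T) :=
    Ioo_mem_nhdsLT_of_mem (Set.mem_Ioc.2 ⟨hTpos, le_refl T⟩)
  have hev' : ∀ᶠ z in nhdsWithin T (Set.Iio T),
      slope (f i) T z < 0 ∧ z ∈ Set.Ioo (0:ℝ) T :=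
    (hev.filter_mono hmono).and (Filter.eventually_of_mem hmem fun z hz => hz)
  obtain ⟨z, hz1, hz2⟩ := hev'.exists
  rw [slope_def_field, hfiTc] at hz1
  have hzT : z - T < 0 := sub_neg.mpr hz2.2
  have hfz : c < f i z := by
    rcases div_neg_iff.mp hz1 with ⟨h1, _⟩ | ⟨_, h2⟩
    · linarith
    · linarith
  exact absurd hfz (not_lt.mpr (hlt z hz2.1.le hz2.2 i).le)
end

section
/- Under the hypotheses of the previous statement with additionally each g_j Lipschitz with constant G_j, suppose there exist ξ_i > 0 and α > 0 such that -ξ_i(d_i(t) - α) + Σ_j ξ_j G_j |a_{ij}(t)| ≤ 0 for all i and t. Then any two solutions u, v of the system u_i' = -d_i(t)u_i + Σ_j a_{ij}(t)g_j(u_j) + I_i(t) satisfy ‖u(t) - v(t)‖_ξ ≤ e^{-αt} ‖u(0) - v(0)‖_ξ for t ≥ 0, where ‖x‖_ξ = max_i ξ_i^{-1}|x_i|. -/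
/-!
With `z i t = exp (α t) * (u t i - v t i)`, the weighted norm `max_i ξ_i⁻¹ |z i t|` is the
maximum of the finitely many differentiable functions `s * ξ_i⁻¹ * z i t`, `s` a sign. At a
maximizing index the Lipschitz bounds and the stability condition make the derivative of that
function nonpositive, and a maximum of differentiable functions whose derivative is nonpositive
wherever they are active has nonpositive lower right Dini derivative, hence is antitone.
-/

open Finset Filter Topology Real

lemma SignType.coe_mul_le_abs {α : Type*} [Ring α] [LinearOrder α] [IsOrderedRing α]
    (s : SignType) (x : α) : (s : α) * x ≤ |x| := by
  cases s <;> simp [le_abs_self, neg_le_abs]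

lemma nonneg_of_abs_sub_le_mul_abs_sub {g : ℝ → ℝ} {G : ℝ}
    (hg : ∀ p q, |g p - g q| ≤ G * |p - q|) : 0 ≤ G := by
  simpa using (abs_nonneg _).trans (hg 1 0)

section SupOfDifferentiable

variable {ι : Type*} [Fintype ι] [Nonempty ι] {φ φ' : ι → ℝ → ℝ}

lemma frequently_slope_sup'_lt (hφ : ∀ k x, HasDerivAt (φ k) (φ' k x) x)
    (hmax : ∀ k x, (∀ l, φ l x ≤ φ k x) → φ' k x ≤ 0) (x : ℝ) {r : ℝ} (hr : 0 < r) :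
    ∃ᶠ z in 𝓝[>] x, slope (fun y => univ.sup' univ_nonempty fun k => φ k y) x z < r := by
  have sup'_eq : ∀ k y, (∀ l, φ l y ≤ φ k y) → univ.sup' univ_nonempty (φ · y) = φ k y :=
    fun k y h => le_antisymm (sup'_le _ _ fun l _ => h l) (le_sup' (φ · y) (mem_univ k))
  obtain ⟨k, hk⟩ : ∃ k, ∃ᶠ z in 𝓝[>] x, ∀ l, φ l z ≤ φ k z :=
    frequently_exists.1 <| Eventually.frequently <|
      Eventually.of_forall fun z => Finite.exists_max (φ · z)
  have hkx : ∀ l, φ l x ≤ φ k x := by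
    have hcont : ∀ l, Continuous (φ l) := fun l =>
      continuous_iff_continuousAt.2 fun y => (hφ l y).continuousAt
    have hclosed : IsClosed {z | ∀ l, φ l z ≤ φ k z} := by
      simpa only [Set.ofPred_forall] using isClosed_iInter fun l => isClosed_le (hcont l) (hcont k)
    exact hclosed.mem_of_frequently_of_tendsto hk (tendsto_id.mono_left nhdsWithin_le_nhds)
  have hslope : ∀ᶠ z in 𝓝[>] x, slope (φ k) x z < r :=
    ((hasDerivAt_iff_tendsto_slope.1 (hφ k x)).mono_left
      (nhdsWithin_mono x fun _ hz => ne_of_gt hz)).eventually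
      (eventually_lt_nhds ((hmax k x hkx).trans_lt hr))
  refine (hk.and_eventually hslope).mono fun z ⟨hz, hlt⟩ => ?_
  rwa [slope_def_field, sup'_eq k z hz, sup'_eq k x hkx, ← slope_def_field]

theorem antitone_sup'_of_hasDerivAt (hφ : ∀ k x, HasDerivAt (φ k) (φ' k x) x)
    (hmax : ∀ k x, (∀ l, φ l x ≤ φ k x) → φ' k x ≤ 0) :
    Antitone fun x => univ.sup' univ_nonempty fun k => φ k x := by
  intro a b hab
  have hcont : Continuous fun x => univ.sup' univ_nonempty fun k => φ k x :=
    Continuous.finset_sup'_apply _ fun l _ =>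
      continuous_iff_continuousAt.2 fun y => (hφ l y).continuousAt
  exact image_le_of_liminf_slope_right_le_deriv_boundary hcont.continuousOn le_rfl
    continuousOn_const (fun x _ => hasDerivWithinAt_const x _ _) (B' := 0)
    (fun x _ _ hr => frequently_slope_sup'_lt hφ hmax x hr) ⟨hab, le_rfl⟩

end SupOfDifferentiable

lemma abs_mul_sum_mul_sub_le {ι : Type*} [Fintype ι] {G a : ι → ℝ} {g : ι → ℝ → ℝ}
    (hg : ∀ j p q, |g j p - g j q| ≤ G j * |p - q|) {c : ℝ} (hc : 0 ≤ c) (p q : ι → ℝ) :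
    |c * ∑ j, a j * (g j (p j) - g j (q j))| ≤ ∑ j, G j * |a j| * |c * (p j - q j)| := by
  calc |c * ∑ j, a j * (g j (p j) - g j (q j))|
      ≤ c * ∑ j, |a j * (g j (p j) - g j (q j))| := by
        rw [abs_mul, abs_of_nonneg hc]
        exact mul_le_mul_of_nonneg_left (abs_sum_le_sum_abs _ _) hc
    _ ≤ c * ∑ j, |a j| * (G j * |p j - q j|) := by
        gcongr with j
        rw [abs_mul]
        exact mul_le_mul_of_nonneg_left (hg j _ _) (abs_nonneg _)
    _ = ∑ j, G j * |a j| * |c * (p j - q j)| := by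
        rw [mul_sum]
        refine sum_congr rfl fun j _ => ?_
        rw [abs_mul, abs_of_nonneg hc]
        ring

lemma signType_mul_weighted_rhs_nonpos_of_max {ι : Type*} [Fintype ι] {ξ G a z : ι → ℝ} {α d R : ℝ}
    {i : ι} (s : SignType) (hξ : ∀ j, 0 < ξ j) (hG : ∀ j, 0 ≤ G j)
    (hstab : -ξ i * (d - α) + ∑ j, ξ j * G j * |a j| ≤ 0)
    (hR : |R| ≤ ∑ j, G j * |a j| * |z j|)
    (hmax : ∀ j (s' : SignType), s' * ((ξ j)⁻¹ * z j) ≤ s * ((ξ i)⁻¹ * z i)) :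
    s * ((ξ i)⁻¹ * ((α - d) * z i + R)) ≤ 0 := by
  set M := (s : ℝ) * ((ξ i)⁻¹ * z i)
  have hz : ∀ j, |z j| ≤ ξ j * M := fun j => by
    have h := hmax j (SignType.sign ((ξ j)⁻¹ * z j))
    rwa [sign_mul_self, abs_mul, abs_inv, abs_of_pos (hξ j), inv_mul_le_iff₀ (hξ j)] at h
  have hM : 0 ≤ M := nonneg_of_mul_nonneg_right ((abs_nonneg _).trans (hz i)) (hξ i)
  have hRM : |R| ≤ (∑ j, ξ j * G j * |a j|) * M := calc
    |R| ≤ ∑ j, G j * |a j| * (ξ j * M) :=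
      hR.trans <| sum_le_sum fun j _ =>
        mul_le_mul_of_nonneg_left (hz j) (mul_nonneg (hG j) (abs_nonneg _))
    _ = (∑ j, ξ j * G j * |a j|) * M := by
      rw [sum_mul]
      exact sum_congr rfl fun j _ => by ring
  calc (s : ℝ) * ((ξ i)⁻¹ * ((α - d) * z i + R))
      = (α - d) * M + s * ((ξ i)⁻¹ * R) := by ring
    _ ≤ (α - d) * M + (ξ i)⁻¹ * ((∑ j, ξ j * G j * |a j|) * M) := by
      refine add_le_add_right ?_ _
      calc (s : ℝ) * ((ξ i)⁻¹ * R) ≤ |(ξ i)⁻¹ * R| := SignType.coe_mul_le_abs _ _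
        _ = (ξ i)⁻¹ * |R| := by rw [abs_mul, abs_of_pos (inv_pos.2 (hξ i))]
        _ ≤ _ := mul_le_mul_of_nonneg_left hRM (inv_nonneg.2 (hξ i).le)
    _ = (ξ i)⁻¹ * M * (-ξ i * (d - α) + ∑ j, ξ j * G j * |a j|) := by
      field_simp [(hξ i).ne']
      ring
    _ ≤ 0 := mul_nonpos_of_nonneg_of_nonpos (mul_nonneg (inv_nonneg.2 (hξ i).le) hM) hstab

lemma hasDerivAt_exp_mul_mul {y : ℝ → ℝ} {α d r t : ℝ} (hy : HasDerivAt y (-d * y t + r) t) :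
    HasDerivAt (fun s => exp (α * s) * y s)
      ((α - d) * (exp (α * t) * y t) + exp (α * t) * r) t := by
  have hexp : HasDerivAt (fun s => exp (α * s)) (exp (α * t) * α) t := by
    simpa using ((hasDerivAt_id t).const_mul α).exp
  exact (hexp.mul hy).congr_deriv (by ring)

open Finset in
theorem stmt5_general (n : ℕ) (α Z₀ : ℝ) (ξ G : Fin n → ℝ)
    (d : Fin n → ℝ → ℝ) (a : Fin n → Fin n → ℝ → ℝ) (I : Fin n → ℝ → ℝ)
    (g : Fin n → ℝ → ℝ) (u v : ℝ → Fin n → ℝ)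
    (hξ : ∀ i, 0 < ξ i)
    (hg : ∀ j p q, |g j p - g j q| ≤ G j * |p - q|)
    (hstab : ∀ i t, -ξ i * (d i t - α) + ∑ j, ξ j * G j * |a i j t| ≤ 0)
    (hu : ∀ t i, HasDerivAt (fun s => u s i)
      (-d i t * u t i + (∑ j, a i j t * g j (u t j)) + I i t) t)
    (hv : ∀ t i, HasDerivAt (fun s => v s i)
      (-d i t * v t i + (∑ j, a i j t * g j (v t j)) + I i t) t)
    (hZ₀ : ∀ i, (ξ i)⁻¹ * |u 0 i - v 0 i| ≤ Z₀) :
    ∀ t ≥ (0 : ℝ), ∀ i, (ξ i)⁻¹ * |u t i - v t i| ≤ Real.exp (-α * t) * Z₀ := by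
  intro t ht i
  have : Nonempty (Fin n) := ⟨i⟩
  set z : Fin n → ℝ → ℝ := fun j s => exp (α * s) * (u s j - v s j)
  have hz : ∀ j s, HasDerivAt (z j)
      ((α - d j s) * z j s + exp (α * s) * ∑ k, a j k s * (g k (u s k) - g k (v s k))) s :=
    fun j s => hasDerivAt_exp_mul_mul <| ((hu s j).sub (hv s j)).congr_deriv <| by
      simp only [mul_sub, sum_sub_distrib]
      ring
  -- `max_s s * x = |x|` over `s : SignType`, so `N s = max_j (ξ j)⁻¹ * |z j s|`.
  set N : ℝ → ℝ := fun s =>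
    univ.sup' univ_nonempty fun k : Fin n × SignType => (k.2 : ℝ) * ((ξ k.1)⁻¹ * z k.1 s)
  have hN : Antitone N :=
    antitone_sup'_of_hasDerivAt (fun k s => ((hz k.1 s).const_mul _).const_mul _)
      fun k s hk => signType_mul_weighted_rhs_nonpos_of_max k.2 hξ
        (fun j => nonneg_of_abs_sub_le_mul_abs_sub (hg j)) (hstab k.1 s)
        (abs_mul_sum_mul_sub_le hg (exp_pos _).le _ _) fun j s' => hk (j, s')
  have hN0 : N 0 ≤ Z₀ := sup'_le _ _ fun k _ =>
    (SignType.coe_mul_le_abs _ _).trans (by simpa [z, abs_mul, abs_of_pos (hξ k.1)] using hZ₀ k.1)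
  have hNt : (ξ i)⁻¹ * |z i t| ≤ N t := by
    rw [← abs_of_pos (inv_pos.2 (hξ i)), ← abs_mul, ← sign_mul_self]
    exact le_sup' (fun k : Fin n × SignType => (k.2 : ℝ) * ((ξ k.1)⁻¹ * z k.1 t))
      (mem_univ (i, SignType.sign _))
  calc (ξ i)⁻¹ * |u t i - v t i| = exp (-α * t) * ((ξ i)⁻¹ * |z i t|) := by
        have hexp : exp (-α * t) * exp (α * t) = 1 := by rw [← exp_add]; simp
        rw [abs_mul, abs_of_pos (exp_pos _)]
        linear_combination -(ξ i)⁻¹ * |u t i - v t i| * hexp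
    _ ≤ exp (-α * t) * Z₀ := by
        gcongr
        exact hNt.trans ((hN ht).trans hN0)

open Finset in
/-- weighted exponential contraction for the delay-free
n-dimensional periodic system. -/
theorem stmt5 (n : ℕ) (ω α Z₀ : ℝ) (ξ G : Fin n → ℝ)
    (d : Fin n → ℝ → ℝ) (a : Fin n → Fin n → ℝ → ℝ) (I : Fin n → ℝ → ℝ)
    (g : Fin n → ℝ → ℝ) (u v : ℝ → Fin n → ℝ)
    (hω : 0 < ω)
    (hd : ∀ i, Continuous (d i)) (ha : ∀ i j, Continuous (a i j))
    (hI : ∀ i, Continuous (I i))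
    (hdper : ∀ i, Function.Periodic (d i) ω)
    (haper : ∀ i j, Function.Periodic (a i j) ω)
    (hIper : ∀ i, Function.Periodic (I i) ω)
    (hdpos : ∀ i t, 0 < d i t)
    (hξ : ∀ i, 0 < ξ i)
    (hg : ∀ j p q, |g j p - g j q| ≤ G j * |p - q|)
    (hα : 0 < α)
    (hstab : ∀ i t, -ξ i * (d i t - α) + ∑ j, ξ j * G j * |a i j t| ≤ 0)
    (hu : ∀ t i, HasDerivAt (fun s => u s i)
      (-d i t * u t i + (∑ j, a i j t * g j (u t j)) + I i t) t)
    (hv : ∀ t i, HasDerivAt (fun s => v s i)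
      (-d i t * v t i + (∑ j, a i j t * g j (v t j)) + I i t) t)
    (hZ₀ : ∀ i, (ξ i)⁻¹ * |u 0 i - v 0 i| ≤ Z₀) :
    ∀ t ≥ (0 : ℝ), ∀ i, (ξ i)⁻¹ * |u t i - v t i| ≤ Real.exp (-α * t) * Z₀ :=
  stmt5_general n α Z₀ ξ G d a I g u v hξ hg hstab hu hv hZ₀
end

section
/- Let d, a, b, I : ℝ → ℝ be continuous ω-periodic with d(t) > 0, let τ > 0 be a constant delay, and let g, f : ℝ → ℝ be Lipschitz with constants G, F respectively. Suppose there exists α > 0 such that -(d(t) - α) + G|a(t)| + F|b(t)| e^{ατ} ≤ 0 for all t. Then for any two solutions u, v of u'(t) = -d(t)u(t) + a(t)g(u(t)) + b(t)f(u(t-τ)) + I(t), the quantity M_z(t) := sup_{s ≤ t} e^{αs}|u(s) - v(s)| is bounded by M_z(0) for all t ≥ 0, hence |u(t) - v(t)| ≤ e^{-αt} M_z(0) for all t ≥ 0. -/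
open Set Real

lemma gbound_lt (δ K M : ℝ) (hK : 0 < K) (hδ : δ < M) :
    gronwallBound δ (-K) (K*M) 1 < M := by
  have hne : (-K) ≠ 0 := by linarith
  have h1 : Real.exp (-K * 1) < 1 := by
    rw [Real.exp_lt_one_iff]; linarith
  have h2 : 0 < Real.exp (-K * 1) := Real.exp_pos _
  have h3 : K * M / (-K) = -M := by
    rw [div_neg, mul_comm, mul_div_assoc, div_self hK.ne', mul_one]
  rw [gronwallBound_of_K_ne_0 hne]
  simp only [h3]
  nlinarith

set_option maxHeartbeats 1000000 in
/-- scalar single-delay exponential contraction (Halanay-type)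
for u' = -d(t)u + a(t)g(u(t)) + b(t)f(u(t-τ)) + I(t). -/
theorem stmt6 (ω τ G F α Z₀ : ℝ) (d a b I g f u v : ℝ → ℝ)
    (hω : 0 < ω) (hτ : 0 < τ)
    (hd : Continuous d) (ha : Continuous a) (hb : Continuous b)
    (hI : Continuous I)
    (hdper : Function.Periodic d ω) (haper : Function.Periodic a ω)
    (hbper : Function.Periodic b ω) (hIper : Function.Periodic I ω)
    (hdpos : ∀ t, 0 < d t)
    (hg : ∀ p q, |g p - g q| ≤ G * |p - q|)
    (hf : ∀ p q, |f p - f q| ≤ F * |p - q|)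
    (hα : 0 < α)
    (hstab : ∀ t, -(d t - α) + G * |a t| + F * |b t| * Real.exp (α * τ) ≤ 0)
    (hu : ∀ t, HasDerivAt u
      (-d t * u t + a t * g (u t) + b t * f (u (t - τ)) + I t) t)
    (hv : ∀ t, HasDerivAt v
      (-d t * v t + a t * g (v t) + b t * f (v (t - τ)) + I t) t)
    (hZ₀ : ∀ s ≤ (0 : ℝ), Real.exp (α * s) * |u s - v s| ≤ Z₀) :
    ∀ t ≥ (0 : ℝ), |u t - v t| ≤ Real.exp (-α * t) * Z₀ := by
  have hG0 : 0 ≤ G := by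
    have h := hg 1 0
    rw [show (1:ℝ) - 0 = 1 by ring, abs_one, mul_one] at h
    linarith [abs_nonneg (g 1 - g 0)]
  have hF0 : 0 ≤ F := by
    have h := hf 1 0
    rw [show (1:ℝ) - 0 = 1 by ring, abs_one, mul_one] at h
    linarith [abs_nonneg (f 1 - f 0)]
  have hcu : Continuous u := continuous_iff_continuousAt.mpr fun t => (hu t).continuousAt
  have hcv : Continuous v := continuous_iff_continuousAt.mpr fun t => (hv t).continuousAt
  set z : ℝ → ℝ := fun s => Real.exp (α * s) * (u s - v s) with hzdef
  have habs : ∀ s, |z s| = Real.exp (α * s) * |u s - v s| := by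
    intro s
    simp only [hzdef]
    rw [abs_mul, abs_of_pos (Real.exp_pos _)]
  have hzc : Continuous z :=
    (Real.continuous_exp.comp (continuous_const.mul continuous_id)).mul (hcu.sub hcv)
  have hZ0 : 0 ≤ Z₀ :=
    le_trans (mul_nonneg (Real.exp_pos _).le (abs_nonneg _)) (hZ₀ 0 le_rfl)
  have hzneg : ∀ s, s ≤ (0:ℝ) → |z s| ≤ Z₀ := fun s hs => by
    rw [habs]; exact hZ₀ s hs
  set E : ℝ → ℝ := fun s =>
    a s * (g (u s) - g (v s)) + b s * (f (u (s - τ)) - f (v (s - τ))) with hEdef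
  set zd : ℝ → ℝ := fun s => (α - d s) * z s + Real.exp (α * s) * E s with hzddef
  have hzd : ∀ t, HasDerivAt z (zd t) t := by
    intro t
    have h1 : HasDerivAt (fun s : ℝ => α * s) (α * 1) t := (hasDerivAt_id t).const_mul α
    have he : HasDerivAt (fun s : ℝ => Real.exp (α * s)) (Real.exp (α * t) * (α * 1)) t :=
      h1.exp
    have hw := (hu t).sub (hv t)
    have := he.mul hw
    refine this.congr_deriv ?_
    simp only [hzddef, hEdef, hzdef, Pi.sub_apply]
    ring
  have hEb : ∀ s, |Real.exp (α * s) * E s| ≤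
      G * |a s| * |z s| + F * |b s| * Real.exp (α * τ) * |z (s - τ)| := by
    intro s
    have h1 : |E s| ≤ |a s| * (G * |u s - v s|) + |b s| * (F * |u (s - τ) - v (s - τ)|) := by
      simp only [hEdef]
      calc |a s * (g (u s) - g (v s)) + b s * (f (u (s - τ)) - f (v (s - τ)))|
          ≤ |a s * (g (u s) - g (v s))| + |b s * (f (u (s - τ)) - f (v (s - τ)))| :=
            abs_add_le _ _
        _ = |a s| * |g (u s) - g (v s)| + |b s| * |f (u (s - τ)) - f (v (s - τ))| := by
            rw [abs_mul, abs_mul]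
        _ ≤ _ := add_le_add (mul_le_mul_of_nonneg_left (hg _ _) (abs_nonneg _))
            (mul_le_mul_of_nonneg_left (hf _ _) (abs_nonneg _))
    have hexp : Real.exp (α * s) = Real.exp (α * τ) * Real.exp (α * (s - τ)) := by
      rw [← Real.exp_add]; ring_nf
    rw [abs_mul, abs_of_pos (Real.exp_pos _)]
    calc Real.exp (α * s) * |E s|
        ≤ Real.exp (α * s) * (|a s| * (G * |u s - v s|)
            + |b s| * (F * |u (s - τ) - v (s - τ)|)) :=
          mul_le_mul_of_nonneg_left h1 (Real.exp_pos _).le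
      _ = G * |a s| * (Real.exp (α * s) * |u s - v s|)
          + F * |b s| * (Real.exp (α * s) * |u (s - τ) - v (s - τ)|) := by ring
      _ = G * |a s| * |z s| + F * |b s| * Real.exp (α * τ) * |z (s - τ)| := by
          rw [habs s, habs (s - τ), hexp]; ring
  -- main claim
  have key : ∀ ε, 0 < ε → ∀ t, 0 ≤ t → |z t| ≤ Z₀ + ε := by
    intro ε hε
    by_contra hcon
    push_neg at hcon
    obtain ⟨t₁, ht₁0, ht₁⟩ := hcon
    set M := Z₀ + ε with hMdef
    have hM0 : 0 ≤ M := by positivity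
    set S : Set ℝ := {t | 0 ≤ t ∧ M ≤ |z t|} with hSdef
    have hSne : S.Nonempty := ⟨t₁, ht₁0, ht₁.le⟩
    have hSbdd : BddBelow S := ⟨0, fun x hx => hx.1⟩
    have hSclosed : IsClosed S := by
      have hSeq : S = Ici 0 ∩ {t | M ≤ |z t|} := by
        ext t; simp [hSdef, Set.mem_setOf_eq, Set.mem_Ici]
      rw [hSeq]
      exact isClosed_Ici.inter (isClosed_le continuous_const hzc.abs)
    set t₀ := sInf S with ht₀def
    have ht₀S : t₀ ∈ S := hSclosed.csInf_mem hSne hSbdd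
    have hlt : ∀ s, s < t₀ → |z s| < M := by
      intro s hs
      rcases lt_or_ge s 0 with h | h
      · exact lt_of_le_of_lt (hzneg s h.le) (by simp only [hMdef]; linarith)
      · by_contra hc
        push_neg at hc
        exact absurd (csInf_le hSbdd ⟨h, hc⟩) (not_le.mpr hs)
    obtain ⟨x₀, hx₀mem, hx₀max⟩ :=
      (isCompact_Icc : IsCompact (Icc (t₀ - 1) t₀)).exists_isMaxOn
        ⟨t₀, right_mem_Icc.mpr (by linarith)⟩ hd.continuousOn
    set C := max (d x₀) 0 with hCdef
    have hC0 : 0 ≤ C := le_max_right _ _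
    have hdC : ∀ x ∈ Icc (t₀ - 1) t₀, d x ≤ C := fun x hx =>
      le_trans (hx₀max hx) (le_max_left _ _)
    set K := 3 * C + 3 with hKdef
    have hK : 0 < K := by linarith
    -- core differential inequality for both signs
    have core : ∀ x ∈ Ico (t₀ - 1) t₀, ∀ σ : ℝ, |σ| = 1 →
        σ * zd x ≤ (-K) * (σ * z x) + K * M := by
      intro x hx σ hσ
      have hzx : |z x| < M := hlt x hx.2
      have hzxt : |z (x - τ)| < M := hlt _ (by linarith [hx.2])
      have hzt0 : 0 ≤ |z (x - τ)| := abs_nonneg _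
      have hEx := hEb x
      have hst := hstab x
      have hdx : d x ≤ C := hdC x (Ico_subset_Icc_self hx)
      have h1 : σ * zd x = (α - d x) * (σ * z x) + σ * (Real.exp (α * x) * E x) := by
        simp only [hzddef]; ring
      have h2 : σ * (Real.exp (α * x) * E x)
          ≤ G * |a x| * |z x| + F * |b x| * Real.exp (α * τ) * |z (x - τ)| := by
        refine le_trans (le_trans (le_abs_self _) ?_) hEx
        rw [abs_mul, hσ, one_mul]
      have hpabs : |σ * z x| = |z x| := by rw [abs_mul, hσ, one_mul]
      set p := σ * z x with hpdef
      have hA0 : (0:ℝ) ≤ |a x| := abs_nonneg _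
      have hB0 : (0:ℝ) ≤ |b x| := abs_nonneg _
      have he0 : (0:ℝ) < Real.exp (α * τ) := Real.exp_pos _
      have hGA : 0 ≤ G * |a x| := mul_nonneg hG0 hA0
      have hFBe : 0 ≤ F * |b x| * Real.exp (α * τ) :=
        mul_nonneg (mul_nonneg hF0 hB0) he0.le
      have hFBeK : F * |b x| * Real.exp (α * τ) ≤ K := by linarith
      have main : (α - d x) * p
          + (G * |a x| * |z x| + F * |b x| * Real.exp (α * τ) * |z (x - τ)|)
          ≤ -K * p + K * M := by
        rcases le_or_gt 0 p with hp | hp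
        · have hzeq : |z x| = p := by rw [← hpabs, abs_of_nonneg hp]
          rw [hzeq]
          have P1 : 0 ≤ p * (-(-(d x - α) + G * |a x| + F * |b x| * Real.exp (α * τ))) :=
            mul_nonneg hp (neg_nonneg.2 hst)
          have P2 : F * |b x| * Real.exp (α * τ) * |z (x - τ)|
              ≤ F * |b x| * Real.exp (α * τ) * M :=
            mul_le_mul_of_nonneg_left hzxt.le hFBe
          have P3 : 0 ≤ (K - F * |b x| * Real.exp (α * τ)) * (M - p) :=
            mul_nonneg (by linarith) (by rw [← hzeq]; linarith)
          nlinarith [P1, P2, P3]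
        · have hzeq : |z x| = -p := by rw [← hpabs, abs_of_neg hp]
          rw [hzeq]
          have hda : 0 ≤ d x - α := by linarith
          have hnpM : -p ≤ M := by rw [← hzeq]; exact hzx.le
          have hnp0 : 0 ≤ -p := by linarith
          have Q1 : (d x - α) * (-p) ≤ C * M :=
            mul_le_mul (by linarith) hnpM hnp0 hC0
          have Q2 : G * |a x| * (-p) ≤ C * M :=
            mul_le_mul (by linarith) hnpM hnp0 hC0
          have Q3 : F * |b x| * Real.exp (α * τ) * |z (x - τ)| ≤ C * M :=
            mul_le_mul (by linarith) hzxt.le hzt0 hC0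
          have Q4 : 0 < K * (-p) := mul_pos hK (by linarith)
          nlinarith [Q1, Q2, Q3, Q4]
      calc σ * zd x = (α - d x) * p + σ * (Real.exp (α * x) * E x) := h1
        _ ≤ (α - d x) * p
            + (G * |a x| * |z x| + F * |b x| * Real.exp (α * τ) * |z (x - τ)|) := by
            linarith
        _ ≤ -K * p + K * M := main
    -- Grönwall for both signs
    set δ := |z (t₀ - 1)| with hδdef
    have hδM : δ < M := hlt _ (by linarith)
    have grw : ∀ σ : ℝ, |σ| = 1 → σ * z t₀ ≤ gronwallBound δ (-K) (K * M) 1 := by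
      intro σ hσ
      have hres := le_gronwallBound_of_liminf_deriv_right_le
        (f := fun s => σ * z s) (f' := fun s => σ * zd s)
        (δ := δ) (K := -K) (ε := K * M) (a := t₀ - 1) (b := t₀)
        ((continuous_const.mul hzc).continuousOn)
        (fun x _ r hr =>
          (((hzd x).const_mul σ).hasDerivWithinAt.liminf_right_slope_le hr))
        (le_trans (le_abs_self _) (le_of_eq (by rw [abs_mul, hσ, one_mul])))
        (fun x hx => core x hx σ hσ)
      have h := hres t₀ (right_mem_Icc.mpr (by linarith))
      simpa [show t₀ - (t₀ - 1) = 1 by ring] using h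
    have hB := gbound_lt δ K M hK hδM
    have h1 := grw 1 (by norm_num)
    have h2 := grw (-1) (by norm_num)
    have hzlt : |z t₀| < M := by
      rw [abs_lt]
      constructor
      · nlinarith [h2, hB]
      · nlinarith [h1, hB]
    exact absurd ht₀S.2 (not_le.mpr hzlt)
  -- conclude
  intro t ht
  have hz : |z t| ≤ Z₀ := le_of_forall_pos_le_add fun ε hε => key ε hε t ht
  rw [habs] at hz
  have h2 : Real.exp (-α * t) * (Real.exp (α * t) * |u t - v t|)
      ≤ Real.exp (-α * t) * Z₀ :=
    mul_le_mul_of_nonneg_left hz (Real.exp_pos _).le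
  rw [← mul_assoc, ← Real.exp_add] at h2
  simpa using h2
end

section
/- Let ξ_1, …, ξ_n > 0, and suppose real numbers d_i > 0, G_i, F_i ≥ 0, a*_{ij}, b*_{ij} ∈ ℝ, τ_{ij} ≥ 0, α ≥ 0, and exponents α_{ij}, β_{ij} ∈ (0,1) satisfy for each i: (-d_i + α)ξ_i + G_i[ξ_i|a*_{ii}| + (1/2)Σ_{j≠i} ξ_j |a*_{ji}|^{2α_{ji}}] + (1/2)ξ_i Σ_{j≠i} G_j |a*_{ij}|^{2(1-α_{ij})} + (1/2)F_i Σ_j ξ_j |b*_{ji}|^{2β_{ji}} e^{ατ_{ji}} + (1/2)ξ_i Σ_j F_j |b*_{ij}|^{2(1-β_{ij})} e^{ατ_{ij}} < 0. Then there exist constants θ_1, …, θ_n > 0 such that for each i: (-d_i + α)θ_i + Σ_j θ_j G_j |a*_{ij}| + Σ_j θ_j F_j |b*_{ij}| e^{ατ_{ij}} < 0. -/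
open Finset Matrix

lemma dual_lemma {n : ℕ} (hn : 0 < n) (V : Matrix (Fin n) (Fin n) ℝ)
    (hoff : ∀ i j, i ≠ j → 0 ≤ V i j)
    (ξ : Fin n → ℝ) (hξ : ∀ i, 0 < ξ i) (hVξ : ∀ i, ∑ j, V i j * ξ j < 0) :
    ∃ η : Fin n → ℝ, (∀ i, 0 < η i) ∧ ∀ i, ∑ j, η j * V j i < 0 := by
  have hne : (univ : Finset (Fin n)).Nonempty := univ_nonempty_iff.mpr (Fin.pos_iff_nonempty.mp hn)
  -- shift to a nonnegative matrix
  set s : ℝ := 1 + ∑ i, |V i i| with hs_def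
  have habs : ∀ i : Fin n, |V i i| ≤ ∑ j, |V j j| := fun i =>
    Finset.single_le_sum (f := fun j => |V j j|) (fun j _ => abs_nonneg _) (mem_univ i)
  have hs0 : 0 < s := by
    have : 0 ≤ ∑ i, |V i i| := Finset.sum_nonneg fun i _ => abs_nonneg _
    linarith
  set N : Matrix (Fin n) (Fin n) ℝ := fun i j => V i j + if i = j then s else 0 with hN_def
  have hN0 : ∀ i j, 0 ≤ N i j := by
    intro i j
    by_cases h : i = j
    · subst h
      have hNii : N i i = V i i + s := by simp [hN_def]
      rw [hNii]
      have := habs i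
      have h2 := neg_abs_le (V i i)
      simp only [hs_def]
      linarith
    · simp only [hN_def, if_neg h, add_zero]
      exact hoff i j h
  have hNξ : ∀ i, ∑ j, N i j * ξ j < s * ξ i := by
    intro i
    have : ∑ j, N i j * ξ j = (∑ j, V i j * ξ j) + s * ξ i := by
      simp only [hN_def, add_mul, ite_mul, zero_mul]
      rw [Finset.sum_add_distrib, Finset.sum_ite_eq (univ : Finset (Fin n)) i (fun j => s * ξ j)]
      simp
    rw [this]
    have := hVξ i
    linarith
  -- μ
  set μ : ℝ := univ.sup' hne (fun i => (∑ j, N i j * ξ j) / ξ i) with hμ_def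
  have hNμ : ∀ i, ∑ j, N i j * ξ j ≤ μ * ξ i := by
    intro i
    have h1 : (∑ j, N i j * ξ j) / ξ i ≤ μ := Finset.le_sup' (f := fun i => (∑ j, N i j * ξ j) / ξ i) (mem_univ i)
    calc ∑ j, N i j * ξ j = ((∑ j, N i j * ξ j) / ξ i) * ξ i :=
          (div_mul_cancel₀ _ (ne_of_gt (hξ i))).symm
      _ ≤ μ * ξ i := by
          apply mul_le_mul_of_nonneg_right h1 (hξ i).le
  have hμ0 : 0 ≤ μ := by
    obtain ⟨i, hi⟩ := hne
    have h1 : (∑ j, N i j * ξ j) / ξ i ≤ μ := Finset.le_sup' (f := fun i => (∑ j, N i j * ξ j) / ξ i) (mem_univ i)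
    have h2 : 0 ≤ (∑ j, N i j * ξ j) / ξ i := by
      apply div_nonneg _ (hξ i).le
      exact Finset.sum_nonneg fun j _ => mul_nonneg (hN0 i j) (hξ j).le
    linarith
  have hμs : μ < s := by
    rw [hμ_def, Finset.sup'_lt_iff]
    intro i _
    rw [div_lt_iff₀ (hξ i)]
    exact hNξ i
  -- powers
  have hpow0 : ∀ (k : ℕ) i j, 0 ≤ (N ^ k) i j := by
    intro k
    induction k with
    | zero => intro i j; simp [Matrix.one_apply]; split <;> norm_num
    | succ k ih =>
      intro i j
      rw [pow_succ, Matrix.mul_apply]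
      exact Finset.sum_nonneg fun l _ => mul_nonneg (ih i l) (hN0 l j)
  have hpowξ : ∀ (k : ℕ) i, ∑ j, (N ^ k) i j * ξ j ≤ μ ^ k * ξ i := by
    intro k
    induction k with
    | zero => intro i; simp [Matrix.one_apply]
    | succ k ih =>
      intro i
      have hexp : ∀ j, (N ^ (k+1)) i j = ∑ l, N i l * (N ^ k) l j := by
        intro j; rw [pow_succ', Matrix.mul_apply]
      calc ∑ j, (N ^ (k+1)) i j * ξ j
          = ∑ j, ∑ l, N i l * (N ^ k) l j * ξ j := by
            congr 1; ext j; rw [hexp, Finset.sum_mul]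
        _ = ∑ l, ∑ j, N i l * (N ^ k) l j * ξ j := Finset.sum_comm
        _ = ∑ l, N i l * (∑ j, (N ^ k) l j * ξ j) := by
            congr 1; ext l
            rw [Finset.mul_sum]
            congr 1; ext j; ring
        _ ≤ ∑ l, N i l * (μ ^ k * ξ l) := by
            apply Finset.sum_le_sum
            intro l _
            exact mul_le_mul_of_nonneg_left (ih l) (hN0 i l)
        _ = μ ^ k * ∑ l, N i l * ξ l := by
            rw [Finset.mul_sum]; congr 1; ext l; ring
        _ ≤ μ ^ k * (μ * ξ i) := by
            apply mul_le_mul_of_nonneg_left (hNμ i) (pow_nonneg hμ0 k)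
        _ = μ ^ (k+1) * ξ i := by ring
  have hentry : ∀ (k : ℕ) i j, (N ^ k) i j * ξ j ≤ μ ^ k * ξ i := by
    intro k i j
    calc (N ^ k) i j * ξ j ≤ ∑ l, (N ^ k) i l * ξ l := by
          apply Finset.single_le_sum (f := fun l => (N ^ k) i l * ξ l)
            (fun l _ => mul_nonneg (hpow0 k i l) (hξ l).le) (mem_univ j)
      _ ≤ μ ^ k * ξ i := hpowξ k i
  -- column sums
  set c : ℕ → Fin n → ℝ := fun k i => ∑ l, (N ^ k) l i with hc_def
  have hc0 : ∀ k i, 0 ≤ c k i := fun k i =>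
    Finset.sum_nonneg fun l _ => hpow0 k l i
  have hczero : ∀ i, c 0 i = 1 := by
    intro i
    simp [hc_def, Matrix.one_apply]
  set Bs : ℝ := ∑ i, ξ i with hB_def
  set m : ℝ := univ.inf' hne ξ with hm_def
  have hm0 : 0 < m := by
    rw [hm_def, Finset.lt_inf'_iff]
    exact fun i _ => hξ i
  have hB0 : 0 < Bs := Finset.sum_pos (fun i _ => hξ i) hne
  have hcb : ∀ (k : ℕ) i, c k i * ξ i ≤ μ ^ k * Bs := by
    intro k i
    rw [hc_def]
    calc (∑ l, (N ^ k) l i) * ξ i = ∑ l, (N ^ k) l i * ξ i := by rw [Finset.sum_mul]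
      _ ≤ ∑ l, μ ^ k * ξ l := Finset.sum_le_sum fun l _ => hentry k l i
      _ = μ ^ k * Bs := by rw [Finset.mul_sum]
  -- choose K
  have hr0 : 0 ≤ μ / s := div_nonneg hμ0 hs0.le
  have hr1 : μ / s < 1 := (div_lt_one hs0).mpr hμs
  obtain ⟨K, hK⟩ : ∃ K : ℕ, (μ / s) ^ K < m / Bs := by
    have := tendsto_pow_atTop_nhds_zero_of_lt_one hr0 hr1
    have hmB : 0 < m / Bs := div_pos hm0 hB0
    exact ((this.eventually (gt_mem_nhds hmB)).exists)
  have hKs : ∀ i, (s⁻¹) ^ (K+1) * c (K+1) i < 1 := by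
    intro i
    have h1 : (μ / s) ^ (K + 1) < m / Bs := by
      calc (μ / s) ^ (K + 1) = (μ / s) ^ K * (μ / s) := pow_succ _ _
        _ ≤ (μ / s) ^ K * 1 := by
            apply mul_le_mul_of_nonneg_left hr1.le (pow_nonneg hr0 K)
        _ = (μ / s) ^ K := mul_one _
        _ < m / Bs := hK
    have hmi : m ≤ ξ i := Finset.inf'_le _ (mem_univ i)
    have h2 : c (K+1) i * ξ i ≤ μ ^ (K+1) * Bs := hcb (K+1) i
    have hsp : 0 < s ^ (K+1) := pow_pos hs0 _
    rw [div_pow, div_lt_div_iff₀ hsp hB0] at h1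
    have h3 : c (K+1) i * ξ i < s ^ (K+1) * ξ i := by
      calc c (K+1) i * ξ i ≤ μ ^ (K+1) * Bs := h2
        _ < m * s ^ (K+1) := h1
        _ ≤ ξ i * s ^ (K+1) := mul_le_mul_of_nonneg_right hmi hsp.le
        _ = s ^ (K+1) * ξ i := mul_comm _ _
    have h4 : c (K+1) i < s ^ (K+1) := lt_of_mul_lt_mul_right h3 (hξ i).le
    rw [inv_pow, inv_mul_eq_div, div_lt_one hsp]
    exact h4
  -- define η
  refine ⟨fun i => ∑ k ∈ range (K+1), (s⁻¹) ^ k * c k i, ?_, ?_⟩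
  · intro i
    have h1 : (1:ℝ) ≤ ∑ k ∈ range (K+1), (s⁻¹) ^ k * c k i := by
      have : (s⁻¹) ^ 0 * c 0 i = 1 := by rw [hczero]; simp
      calc (1:ℝ) = (s⁻¹) ^ 0 * c 0 i := this.symm
        _ ≤ ∑ k ∈ range (K+1), (s⁻¹) ^ k * c k i := by
            apply Finset.single_le_sum (f := fun k => (s⁻¹) ^ k * c k i)
              (fun k _ => mul_nonneg (pow_nonneg (inv_nonneg.mpr hs0.le) k) (hc0 k i))
              (mem_range.mpr (Nat.succ_pos K))
    linarith
  · intro i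
    have hVN : ∀ j, V j i = N j i - (if j = i then s else 0) := by
      intro j; simp [hN_def]
    have hstep : ∀ k, ∑ j, c k j * N j i = c (k+1) i := by
      intro k
      simp only [hc_def]
      calc ∑ j, (∑ l, (N ^ k) l j) * N j i
          = ∑ j, ∑ l, (N ^ k) l j * N j i := by
            congr 1; ext j; rw [Finset.sum_mul]
        _ = ∑ l, ∑ j, (N ^ k) l j * N j i := Finset.sum_comm
        _ = ∑ l, (N ^ (k+1)) l i := by
            refine Finset.sum_congr rfl fun l _ => ?_
            rw [pow_succ, Matrix.mul_apply]
    set g : ℕ → ℝ := fun k => (s⁻¹) ^ k * c k i with hg_def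
    have hsne : s ≠ 0 := ne_of_gt hs0
    have hηN : ∑ j, (∑ k ∈ range (K+1), (s⁻¹) ^ k * c k j) * N j i
        = ∑ k ∈ range (K+1), s * g (k+1) := by
      calc ∑ j, (∑ k ∈ range (K+1), (s⁻¹) ^ k * c k j) * N j i
          = ∑ j, ∑ k ∈ range (K+1), (s⁻¹) ^ k * c k j * N j i := by
            congr 1; ext j; rw [Finset.sum_mul]
        _ = ∑ k ∈ range (K+1), ∑ j, (s⁻¹) ^ k * c k j * N j i := Finset.sum_comm
        _ = ∑ k ∈ range (K+1), (s⁻¹) ^ k * (∑ j, c k j * N j i) := by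
            congr 1; ext k; rw [Finset.mul_sum]; congr 1; ext j; ring
        _ = ∑ k ∈ range (K+1), (s⁻¹) ^ k * c (k+1) i := by
            congr 1; ext k; rw [hstep]
        _ = ∑ k ∈ range (K+1), s * g (k+1) := by
            congr 1; ext k
            simp only [hg_def]
            rw [pow_succ]
            field_simp
    have hsumV : ∑ j, (∑ k ∈ range (K+1), (s⁻¹) ^ k * c k j) * V j i
        = ∑ k ∈ range (K+1), s * g (k+1) - s * ∑ k ∈ range (K+1), g k := by
      have : ∀ j, (∑ k ∈ range (K+1), (s⁻¹) ^ k * c k j) * V j i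
          = (∑ k ∈ range (K+1), (s⁻¹) ^ k * c k j) * N j i
            - (if j = i then s else 0) * (∑ k ∈ range (K+1), (s⁻¹) ^ k * c k j) := by
        intro j
        rw [hVN j]
        ring
      rw [Finset.sum_congr rfl (fun j _ => this j), Finset.sum_sub_distrib, hηN]
      congr 1
      simp only [ite_mul, zero_mul]
      rw [Finset.sum_ite_eq' (univ : Finset (Fin n)) i
        (fun j => s * ∑ k ∈ range (K+1), (s⁻¹) ^ k * c k j)]
      simp only [mem_univ, if_pos, hg_def, Finset.mul_sum]
    have htel : ∑ k ∈ range (K+1), s * g (k+1) - s * ∑ k ∈ range (K+1), g k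
        = s * (g (K+1) - 1) := by
      have h1 : ∑ k ∈ range (K+1), g (k+1) = ∑ k ∈ range (K+2), g k - g 0 := by
        rw [Finset.sum_range_succ' g (K+1)]
        ring
      have h2 : ∑ k ∈ range (K+2), g k = ∑ k ∈ range (K+1), g k + g (K+1) :=
        Finset.sum_range_succ g (K+1)
      have hg0 : g 0 = 1 := by simp [hg_def, hczero i]
      rw [← Finset.mul_sum, h1, h2, hg0]
      ring
    have hglt : g (K+1) < 1 := by
      simpa [hg_def] using hKs i
    calc ∑ j, (∑ k ∈ range (K+1), (s⁻¹) ^ k * c k j) * V j i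
        = s * (g (K+1) - 1) := by rw [hsumV, htel]
      _ < 0 := by nlinarith

lemma amgm_key (x y c a r : ℝ) (hx : 0 ≤ x) (hy : 0 ≤ y) (hc : 0 ≤ c)
    (hr0 : 0 < r) (hr1 : r < 1) :
    Real.sqrt x * Real.sqrt y * (c * |a|) ≤
      (1/2) * (x * (c * |a| ^ (2 * (1 - r)))) + (1/2) * (y * (c * |a| ^ (2 * r))) := by
  have ha : (0:ℝ) ≤ |a| := abs_nonneg a
  have h1 : |a| ^ (1 - r) * |a| ^ r = |a| := by
    rw [← Real.rpow_add' ha (by intro h; linarith)]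
    norm_num
  have h2 : |a| ^ (1 - r) * |a| ^ (1 - r) = |a| ^ (2 * (1 - r)) := by
    rw [show (2 * (1 - r)) = (1 - r) + (1 - r) from by ring,
      Real.rpow_add' ha (by intro h; linarith)]
  have h3 : |a| ^ r * |a| ^ r = |a| ^ (2 * r) := by
    rw [show (2 * r) = r + r from by ring, Real.rpow_add' ha (by intro h; linarith)]
  have hsx : Real.sqrt x * Real.sqrt x = x := Real.mul_self_sqrt hx
  have hsy : Real.sqrt y * Real.sqrt y = y := Real.mul_self_sqrt hy
  have key : 2 * (Real.sqrt x * |a| ^ (1-r)) * (Real.sqrt y * |a| ^ r)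
      ≤ (Real.sqrt x * |a| ^ (1-r))^2 + (Real.sqrt y * |a| ^ r)^2 := two_mul_le_add_sq _ _
  have e1 : 2 * (Real.sqrt x * |a| ^ (1-r)) * (Real.sqrt y * |a| ^ r)
      = 2 * (Real.sqrt x * Real.sqrt y * |a|) := by
    rw [show 2 * (Real.sqrt x * |a| ^ (1-r)) * (Real.sqrt y * |a| ^ r)
      = 2 * (Real.sqrt x * Real.sqrt y) * (|a| ^ (1-r) * |a| ^ r) from by ring, h1]
    ring
  have e2 : (Real.sqrt x * |a| ^ (1-r))^2 = x * |a| ^ (2*(1-r)) := by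
    rw [pow_two, show (Real.sqrt x * |a| ^ (1-r)) * (Real.sqrt x * |a| ^ (1-r))
      = (Real.sqrt x * Real.sqrt x) * (|a| ^ (1-r) * |a| ^ (1-r)) from by ring, hsx, h2]
  have e3 : (Real.sqrt y * |a| ^ r)^2 = y * |a| ^ (2*r) := by
    rw [pow_two, show (Real.sqrt y * |a| ^ r) * (Real.sqrt y * |a| ^ r)
      = (Real.sqrt y * Real.sqrt y) * (|a| ^ r * |a| ^ r) from by ring, hsy, h3]
  rw [e1, e2, e3] at key
  nlinarith [mul_le_mul_of_nonneg_left key hc]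




open Finset in
/-- Theorem B: the symmetrized condition (3.1) implies the
weighted diagonal dominance condition (3.3). -/
theorem stmt8 (n : ℕ) (α : ℝ) (ξ d G F : Fin n → ℝ)
    (A B τ : Fin n → Fin n → ℝ) (αe βe : Fin n → Fin n → ℝ)
    (hξ : ∀ i, 0 < ξ i) (hd : ∀ i, 0 < d i)
    (hG : ∀ i, 0 ≤ G i) (hF : ∀ i, 0 ≤ F i)
    (hτ : ∀ i j, 0 ≤ τ i j) (hα : 0 ≤ α)
    (hαe : ∀ i j, αe i j ∈ Set.Ioo (0 : ℝ) 1)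
    (hβe : ∀ i j, βe i j ∈ Set.Ioo (0 : ℝ) 1)
    (h31 : ∀ i,
      (-d i + α) * ξ i
        + G i * (ξ i * |A i i|
            + (1 / 2) * ∑ j ∈ univ.erase i, ξ j * |A j i| ^ (2 * αe j i))
        + (1 / 2) * ξ i * ∑ j ∈ univ.erase i, G j * |A i j| ^ (2 * (1 - αe i j))
        + (1 / 2) * F i * ∑ j, ξ j * |B j i| ^ (2 * βe j i) * Real.exp (α * τ j i)
        + (1 / 2) * ξ i * ∑ j, F j * |B i j| ^ (2 * (1 - βe i j)) * Real.exp (α * τ i j)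
        < 0) :
    ∃ θ : Fin n → ℝ, (∀ i, 0 < θ i) ∧ ∀ i,
      (-d i + α) * θ i + (∑ j, θ j * G j * |A i j|)
        + (∑ j, θ j * F j * |B i j| * Real.exp (α * τ i j)) < 0 := by
  rcases Nat.eq_zero_or_pos n with hn | hn
  · subst hn
    exact ⟨fun _ => 1, fun i => i.elim0, fun i => i.elim0⟩
  -- the matrix of the symmetrized condition (3.1)
  set V : Matrix (Fin n) (Fin n) ℝ := fun i j =>
    if i = j then
      (-d i + α) + G i * |A i i|
        + (1 / 2) * ∑ k ∈ univ.erase i, G k * |A i k| ^ (2 * (1 - αe i k))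
        + (1 / 2) * (F i * (|B i i| ^ (2 * βe i i) * Real.exp (α * τ i i)))
        + (1 / 2) * ∑ k, F k * |B i k| ^ (2 * (1 - βe i k)) * Real.exp (α * τ i k)
    else
      (1 / 2) * (G i * |A j i| ^ (2 * αe j i))
        + (1 / 2) * (F i * (|B j i| ^ (2 * βe j i) * Real.exp (α * τ j i)))
    with hV_def
  have hVdiag : ∀ i, V i i =
      (-d i + α) + G i * |A i i|
        + (1 / 2) * ∑ k ∈ univ.erase i, G k * |A i k| ^ (2 * (1 - αe i k))
        + (1 / 2) * (F i * (|B i i| ^ (2 * βe i i) * Real.exp (α * τ i i)))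
        + (1 / 2) * ∑ k, F k * |B i k| ^ (2 * (1 - βe i k)) * Real.exp (α * τ i k) := by
    intro i; simp [hV_def]
  have hVoff : ∀ i j, i ≠ j → V i j =
      (1 / 2) * (G i * |A j i| ^ (2 * αe j i))
        + (1 / 2) * (F i * (|B j i| ^ (2 * βe j i) * Real.exp (α * τ j i))) := by
    intro i j h; simp only [hV_def]; rw [if_neg h]
  have hoff : ∀ i j, i ≠ j → 0 ≤ V i j := by
    intro i j h
    rw [hVoff i j h]
    have t1 : 0 ≤ G i * |A j i| ^ (2 * αe j i) :=
      mul_nonneg (hG i) (Real.rpow_nonneg (abs_nonneg _) _)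
    have t2 : 0 ≤ F i * (|B j i| ^ (2 * βe j i) * Real.exp (α * τ j i)) :=
      mul_nonneg (hF i) (mul_nonneg (Real.rpow_nonneg (abs_nonneg _) _) (Real.exp_pos _).le)
    linarith
  have hVξ : ∀ i, ∑ j, V i j * ξ j < 0 := by
    intro i
    have e1 : ∑ j, V i j * ξ j
        = (∑ j ∈ univ.erase i, ((1 / 2) * (G i * |A j i| ^ (2 * αe j i))
            + (1 / 2) * (F i * (|B j i| ^ (2 * βe j i) * Real.exp (α * τ j i)))) * ξ j)
          + V i i * ξ i := by
      rw [← Finset.sum_erase_add univ _ (mem_univ i)]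
      congr 1
      refine Finset.sum_congr rfl fun j hj => ?_
      have hij : i ≠ j := fun h => (Finset.mem_erase.mp hj).1 h.symm
      rw [hVoff i j hij]
    have e2 : ∑ j ∈ univ.erase i, ((1 / 2) * (G i * |A j i| ^ (2 * αe j i))
            + (1 / 2) * (F i * (|B j i| ^ (2 * βe j i) * Real.exp (α * τ j i)))) * ξ j
        = (1 / 2) * G i * (∑ j ∈ univ.erase i, ξ j * |A j i| ^ (2 * αe j i))
          + (1 / 2) * F i * (∑ j ∈ univ.erase i, ξ j * |B j i| ^ (2 * βe j i)
              * Real.exp (α * τ j i)) := by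
      rw [Finset.mul_sum, Finset.mul_sum, ← Finset.sum_add_distrib]
      refine Finset.sum_congr rfl fun j hj => ?_
      ring
    have hsplitB : (∑ j, ξ j * |B j i| ^ (2 * βe j i) * Real.exp (α * τ j i))
        = (∑ j ∈ univ.erase i, ξ j * |B j i| ^ (2 * βe j i) * Real.exp (α * τ j i))
          + ξ i * |B i i| ^ (2 * βe i i) * Real.exp (α * τ i i) :=
      (Finset.sum_erase_add _ _ (mem_univ i)).symm
    have h := h31 i
    rw [hsplitB] at h
    rw [e1, e2, hVdiag i]
    ring_nf
    ring_nf at h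
    linarith
  -- dual positive vector
  obtain ⟨η, hη, hηV⟩ := dual_lemma hn V hoff ξ hξ hVξ
  refine ⟨fun i => Real.sqrt (η i), fun i => Real.sqrt_pos.mpr (hη i), ?_⟩
  intro i
  set θ : Fin n → ℝ := fun i => Real.sqrt (η i) with hθ_def
  have hss : ∀ j, θ j * θ j = η j := fun j => Real.mul_self_sqrt (hη j).le
  have hθ0 : ∀ j, 0 ≤ θ j := fun j => Real.sqrt_nonneg _
  -- multiply the goal by θ i
  have key : θ i * ((-d i + α) * θ i + (∑ j, θ j * G j * |A i j|)
      + (∑ j, θ j * F j * |B i j| * Real.exp (α * τ i j))) < 0 := by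
    have e5 : θ i * ((-d i + α) * θ i + (∑ j, θ j * G j * |A i j|)
        + (∑ j, θ j * F j * |B i j| * Real.exp (α * τ i j)))
        = (-d i + α) * η i + (∑ j, θ i * θ j * (G j * |A i j|))
          + (∑ j, θ i * θ j * (F j * |B i j| * Real.exp (α * τ i j))) := by
      rw [mul_add, mul_add, Finset.mul_sum, Finset.mul_sum]
      congr 1
      congr 1
      · rw [← hss i]; ring
      · all_goals exact Finset.sum_congr rfl fun j _ => by ring
      · all_goals exact Finset.sum_congr rfl fun j _ => by ring
    rw [e5]
    -- split the A-sum at the diagonal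
    have eA : (∑ j, θ i * θ j * (G j * |A i j|))
        = (∑ j ∈ univ.erase i, θ i * θ j * (G j * |A i j|)) + η i * (G i * |A i i|) := by
      rw [← Finset.sum_erase_add univ _ (mem_univ i), ← hss i]
    -- AM-GM bounds
    have hA : ∀ j ∈ univ.erase i, θ i * θ j * (G j * |A i j|)
        ≤ (1 / 2) * (η i * (G j * |A i j| ^ (2 * (1 - αe i j))))
          + (1 / 2) * (η j * (G j * |A i j| ^ (2 * αe i j))) := by
      intro j _
      exact amgm_key (η i) (η j) (G j) (A i j) (αe i j) (hη i).le (hη j).le (hG j)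
        (hαe i j).1 (hαe i j).2
    have hB : ∀ j, θ i * θ j * (F j * |B i j| * Real.exp (α * τ i j))
        ≤ (1 / 2) * (η i * ((F j * Real.exp (α * τ i j)) * |B i j| ^ (2 * (1 - βe i j))))
          + (1 / 2) * (η j * ((F j * Real.exp (α * τ i j)) * |B i j| ^ (2 * βe i j))) := by
      intro j
      have := amgm_key (η i) (η j) (F j * Real.exp (α * τ i j)) (B i j) (βe i j)
        (hη i).le (hη j).le (mul_nonneg (hF j) (Real.exp_pos _).le)
        (hβe i j).1 (hβe i j).2
      calc θ i * θ j * (F j * |B i j| * Real.exp (α * τ i j))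
          = θ i * θ j * ((F j * Real.exp (α * τ i j)) * |B i j|) := by ring
        _ ≤ _ := this
    -- upper bound everything by ∑ j, η j * V j i
    set s1 : ℝ := ∑ j ∈ univ.erase i, η j * (G j * |A i j| ^ (2 * αe i j)) with hs1
    set s2 : ℝ := ∑ j ∈ univ.erase i, G j * |A i j| ^ (2 * (1 - αe i j)) with hs2
    set s3 : ℝ := ∑ j ∈ univ.erase i,
      η j * (F j * (|B i j| ^ (2 * βe i j) * Real.exp (α * τ i j))) with hs3
    set s4 : ℝ := ∑ j, F j * |B i j| ^ (2 * (1 - βe i j)) * Real.exp (α * τ i j) with hs4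
    have hub : (-d i + α) * η i + (∑ j, θ i * θ j * (G j * |A i j|))
        + (∑ j, θ i * θ j * (F j * |B i j| * Real.exp (α * τ i j)))
        ≤ ∑ j, η j * V j i := by
      have hAle : (∑ j ∈ univ.erase i, θ i * θ j * (G j * |A i j|))
          ≤ (1 / 2) * (η i * s2) + (1 / 2) * s1 := by
        calc (∑ j ∈ univ.erase i, θ i * θ j * (G j * |A i j|))
            ≤ ∑ j ∈ univ.erase i,
                ((1 / 2) * (η i * (G j * |A i j| ^ (2 * (1 - αe i j))))
                  + (1 / 2) * (η j * (G j * |A i j| ^ (2 * αe i j)))) :=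
              Finset.sum_le_sum hA
          _ = (1 / 2) * (η i * s2) + (1 / 2) * s1 := by
              rw [Finset.sum_add_distrib]
              congr 1
              · rw [hs2, Finset.mul_sum, Finset.mul_sum]
                all_goals exact Finset.sum_congr rfl fun j _ => by ring
              · rw [hs1, Finset.mul_sum]
                all_goals exact Finset.sum_congr rfl fun j _ => by ring
      have hBle : (∑ j, θ i * θ j * (F j * |B i j| * Real.exp (α * τ i j)))
          ≤ (1 / 2) * (η i * s4) + ((1 / 2) * s3
              + (1 / 2) * (η i * (F i * (|B i i| ^ (2 * βe i i) * Real.exp (α * τ i i))))) := by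
        calc (∑ j, θ i * θ j * (F j * |B i j| * Real.exp (α * τ i j)))
            ≤ ∑ j, ((1 / 2) * (η i * ((F j * Real.exp (α * τ i j)) * |B i j| ^ (2 * (1 - βe i j))))
                + (1 / 2) * (η j * ((F j * Real.exp (α * τ i j)) * |B i j| ^ (2 * βe i j)))) :=
              Finset.sum_le_sum fun j _ => hB j
          _ = (1 / 2) * (η i * s4) + (∑ j,
                (1 / 2) * (η j * ((F j * Real.exp (α * τ i j)) * |B i j| ^ (2 * βe i j)))) := by
              rw [Finset.sum_add_distrib]
              congr 1
              rw [hs4, Finset.mul_sum, Finset.mul_sum]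
              all_goals exact Finset.sum_congr rfl fun j _ => by ring
          _ = (1 / 2) * (η i * s4) + ((1 / 2) * s3
              + (1 / 2) * (η i * (F i * (|B i i| ^ (2 * βe i i) * Real.exp (α * τ i i))))) := by
              congr 1
              rw [← Finset.sum_erase_add univ
                (fun j => (1 / 2) * (η j * ((F j * Real.exp (α * τ i j)) * |B i j| ^ (2 * βe i j))))
                (mem_univ i)]
              congr 1
              · rw [hs3, Finset.mul_sum]
                all_goals exact Finset.sum_congr rfl fun j _ => by ring
              · ring
      have hRHS : ∑ j, η j * V j i = (1 / 2) * s1 + (1 / 2) * s3 + η i * V i i := by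
        rw [← Finset.sum_erase_add univ _ (mem_univ i)]
        congr 1
        rw [hs1, hs3, Finset.mul_sum, Finset.mul_sum, ← Finset.sum_add_distrib]
        refine Finset.sum_congr rfl fun j hj => ?_
        have hji : j ≠ i := (Finset.mem_erase.mp hj).1
        rw [hVoff j i hji]
        ring
      have hdiag : η i * V i i
          = (-d i + α) * η i + η i * (G i * |A i i|) + (1 / 2) * (η i * s2)
            + (1 / 2) * (η i * (F i * (|B i i| ^ (2 * βe i i) * Real.exp (α * τ i i))))
            + (1 / 2) * (η i * s4) := by
        rw [hVdiag i, ← hs2, ← hs4]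
        ring
      rw [eA, hRHS]
      linarith [hAle, hBle, hdiag]
    calc (-d i + α) * η i + (∑ j, θ i * θ j * (G j * |A i j|))
        + (∑ j, θ i * θ j * (F j * |B i j| * Real.exp (α * τ i j)))
        ≤ ∑ j, η j * V j i := hub
      _ < 0 := hηV i
  by_contra hcon
  push_neg at hcon
  have := mul_nonneg (hθ0 i) hcon
  linarith
end

section
/- There exist constants d_i > 0, G_j, F_j ≥ 0, a*_{ij}, b*_{ij}, τ_{ij} ≥ 0 (for n = 2, say) and positive weights θ_1, θ_2 satisfying -d_i θ_i + Σ_j θ_j G_j |a*_{ij}| + Σ_j θ_j F_j |b*_{ij}| < 0 for i = 1, 2, such that for NO choice of positive weights ξ_i > 0 and exponents α_{ij}, β_{ij} ∈ (0,1) does the condition (-d_i)ξ_i + G_i[ξ_i|a*_{ii}| + (1/2)Σ_{j≠i} ξ_j |a*_{ji}|^{2α_{ji}}] + (1/2)ξ_i Σ_{j≠i} G_j |a*_{ij}|^{2(1-α_{ij})} + (1/2)F_i Σ_j ξ_j |b*_{ji}|^{2β_{ji}} + (1/2)ξ_i Σ_j F_j |b*_{ij}|^{2(1-β_{ij})} <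 0 hold for all i. -/
/-!
Condition (3.3) only involves the products `θ j * G j * |A i j|`, so a small weight `θ j` absorbs
an arbitrarily large coupling `G j * |A i j|` from neighbour `j` into row `i`. In row `i` of (3.1)
the same coupling appears as `(1/2) * ξ i * G j * |A i j| ^ (2 * (1 - α i j))`, multiplied by the
row's own weight `ξ i`, so no choice of weights helps: with `d = 1`, `G 1 = 2` and `A 0 1 = 2`,
row `0` reads at least `ξ 0 * (2 ^ (2 * (1 - α 0 1)) - 1) > 0`.
-/

open Finset

/-- The left-hand side of row `i` of condition (3.1) of Zhou, with `α = 0`. -/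
noncomputable def zhouRow {ι : Type*} [Fintype ι] [DecidableEq ι] (d G F ξ : ι → ℝ)
    (A B αe βe : ι → ι → ℝ) (i : ι) : ℝ :=
  (-d i) * ξ i
    + G i * (ξ i * |A i i| + (1 / 2) * ∑ j ∈ univ.erase i, ξ j * |A j i| ^ (2 * αe j i))
    + (1 / 2) * ξ i * ∑ j ∈ univ.erase i, G j * |A i j| ^ (2 * (1 - αe i j))
    + (1 / 2) * F i * ∑ j, ξ j * |B j i| ^ (2 * βe j i)
    + (1 / 2) * ξ i * ∑ j, F j * |B i j| ^ (2 * (1 - βe i j))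

lemma le_zhouRow_of_ne {ι : Type*} [Fintype ι] [DecidableEq ι] {d G F ξ : ι → ℝ}
    {A B αe βe : ι → ι → ℝ} (hG : ∀ j, 0 ≤ G j) (hF : ∀ j, 0 ≤ F j) (hξ : ∀ j, 0 ≤ ξ j)
    {i j : ι} (hji : j ≠ i) :
    ξ i * (-d i + (1 / 2) * G j * |A i j| ^ (2 * (1 - αe i j)))
      ≤ zhouRow d G F ξ A B αe βe i := by
  have hpow : ∀ (x e : ℝ), 0 ≤ |x| ^ e := fun x e => Real.rpow_nonneg (abs_nonneg x) e
  have hdiag :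
      0 ≤ G i * (ξ i * |A i i| + (1 / 2) * ∑ k ∈ univ.erase i, ξ k * |A k i| ^ (2 * αe k i)) :=
    mul_nonneg (hG i) <| add_nonneg (mul_nonneg (hξ i) (abs_nonneg _)) <|
      mul_nonneg (by norm_num) <| sum_nonneg fun k _ => mul_nonneg (hξ k) (hpow _ _)
  have hoff : G j * |A i j| ^ (2 * (1 - αe i j))
      ≤ ∑ k ∈ univ.erase i, G k * |A i k| ^ (2 * (1 - αe i k)) :=
    single_le_sum (f := fun k => G k * |A i k| ^ (2 * (1 - αe i k)))
      (fun k _ => mul_nonneg (hG k) (hpow _ _)) (mem_erase.2 ⟨hji, mem_univ j⟩)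
  have hBin : 0 ≤ (1 / 2) * F i * ∑ k, ξ k * |B k i| ^ (2 * βe k i) :=
    mul_nonneg (mul_nonneg (by norm_num) (hF i)) <|
      sum_nonneg fun k _ => mul_nonneg (hξ k) (hpow _ _)
  have hBout : 0 ≤ (1 / 2) * ξ i * ∑ k, F k * |B i k| ^ (2 * (1 - βe i k)) :=
    mul_nonneg (mul_nonneg (by norm_num) (hξ i)) <|
      sum_nonneg fun k _ => mul_nonneg (hF k) (hpow _ _)
  have hmid := mul_le_mul_of_nonneg_left hoff (mul_nonneg (by norm_num : (0 : ℝ) ≤ 1 / 2) (hξ i))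
  unfold zhouRow
  linarith

open Finset in
/-- "the converse is not true": condition (3.3) can hold while
condition (3.1) (with α = 0) fails for every choice of weights and exponents. -/
theorem stmt9 :
    ∃ (d G F : Fin 2 → ℝ) (A B τ : Fin 2 → Fin 2 → ℝ) (θ : Fin 2 → ℝ),
      (∀ i, 0 < d i) ∧ (∀ j, 0 ≤ G j) ∧ (∀ j, 0 ≤ F j) ∧
      (∀ i j, 0 ≤ τ i j) ∧ (∀ i, 0 < θ i) ∧
      (∀ i, -d i * θ i + (∑ j, θ j * G j * |A i j|)
          + (∑ j, θ j * F j * |B i j|) < 0) ∧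
      ∀ (ξ : Fin 2 → ℝ) (αe βe : Fin 2 → Fin 2 → ℝ),
        (∀ i, 0 < ξ i) →
        (∀ i j, αe i j ∈ Set.Ioo (0 : ℝ) 1) →
        (∀ i j, βe i j ∈ Set.Ioo (0 : ℝ) 1) →
        ¬ (∀ i,
          (-d i) * ξ i
            + G i * (ξ i * |A i i|
                + (1 / 2) * ∑ j ∈ univ.erase i, ξ j * |A j i| ^ (2 * αe j i))
            + (1 / 2) * ξ i * ∑ j ∈ univ.erase i, G j * |A i j| ^ (2 * (1 - αe i j))
            + (1 / 2) * F i * ∑ j, ξ j * |B j i| ^ (2 * βe j i)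
            + (1 / 2) * ξ i * ∑ j, F j * |B i j| ^ (2 * (1 - βe i j)) < 0) := by
  have hG : ∀ j, (0 : ℝ) ≤ ![0, 2] j := fun j => by fin_cases j <;> norm_num
  refine ⟨fun _ => 1, ![0, 2], fun _ => 0, ![![0, 2], ![0, 0]], fun _ _ => 0, fun _ _ => 0,
    ![1, 1 / 10], fun _ => one_pos, hG, fun _ => le_rfl, fun _ _ => le_rfl,
    fun i => by fin_cases i <;> norm_num,
    fun i => by fin_cases i <;> norm_num [Fin.sum_univ_two], ?_⟩
  intro ξ αe βe hξ hα _ hrows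
  have hexp : (1 : ℝ) < 2 ^ (2 * (1 - αe 0 1)) :=
    Real.one_lt_rpow (by norm_num) (by linarith [(hα 0 1).2])
  have hrow0 := le_zhouRow_of_ne (d := fun _ => 1) (A := ![![0, 2], ![0, 0]]) (B := fun _ _ => 0)
    (αe := αe) (βe := βe) hG (fun _ => le_rfl) (fun j => (hξ j).le)
    (i := 0) (j := 1) (by decide)
  have hpos : 0 < ξ 0 * (-1 + (1 / 2) * 2 * |(2 : ℝ)| ^ (2 * (1 - αe 0 1))) := by
    rw [abs_two]; exact mul_pos (hξ 0) (by linarith)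
  exact absurd (hrows 0) (not_lt.2 (hpos.le.trans hrow0))
end

section
/- Let C be the Poincaré map T(φ₀) = x(ω; φ₀) of the scalar periodic ODE u' = -d(t)u + a(t)g(u) + I(t), with d, a, I continuous ω-periodic, d(t) > 0, and g Lipschitz with constant G, satisfying -(d(t) - α) + G|a(t)| ≤ 0 for some α > 0. Then T is a contraction on ℝ with Lipschitz constant at most e^{-αω} < 1, and hence has a unique fixed point, whose orbit is the unique ω-periodic solution and attracts all solutions. -/
/-!
The difference `w = u - v` of two solutions satisfies `w' w ≤ -α w²`: the linear part contributes
`-d w²` and the Lipschitz nonlinearity at most `G |a| w²`, and `-d + G |a| ≤ -α`. Hence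
`(e^{α t} w)²` is nonincreasing, which gives `|u t - v t| ≤ e^{-α t} |u 0 - v 0|`. At `t = ω` the
Poincaré map is therefore a contraction of `ℝ`, and Banach's theorem gives a unique fixed point.
By periodicity of the coefficients, `t ↦ x p (t + ω)` is again a solution; for the fixed point it
starts at `p`, so uniqueness of solutions makes `x p` periodic.
-/

open Real

theorem abs_le_exp_mul_abs_of_deriv_mul_self_le {w w' : ℝ → ℝ} {α : ℝ}
    (hw : ∀ s, HasDerivAt w (w' s) s) (hdecay : ∀ s, w' s * w s ≤ -α * w s ^ 2)
    {t : ℝ} (ht : 0 ≤ t) : |w t| ≤ exp (-α * t) * |w 0| := by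
  have hz : ∀ s, HasDerivAt (fun s => (exp (α * s) * w s) ^ 2)
      (2 * exp (α * s) ^ 2 * (α * w s ^ 2 + w' s * w s)) s := fun s =>
    ((((hasDerivAt_id s).const_mul α).exp.mul (hw s)).pow 2).congr_deriv (by
      simp only [Nat.cast_ofNat, id_eq, Pi.mul_apply, Nat.add_one_sub_one, pow_one, mul_one]; ring)
  have hz_anti := antitone_of_hasDerivAt_nonpos hz fun s =>
    mul_nonpos_of_nonneg_of_nonpos (by positivity) (by linarith [hdecay s])
  have hscaled : exp (α * t) * |w t| ≤ |w 0| := by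
    simpa [abs_mul, abs_of_pos (exp_pos _)] using sq_le_sq.mp (hz_anti ht)
  calc |w t| = exp (-α * t) * (exp (α * t) * |w t|) := by
        rw [← mul_assoc, ← exp_add, neg_mul, neg_add_cancel, exp_zero, one_mul]
    _ ≤ exp (-α * t) * |w 0| := by gcongr

namespace ScalarPeriodicODE

theorem field_sub_mul_sub_le {d a G α u v : ℝ} {g : ℝ → ℝ} (hg : |g u - g v| ≤ G * |u - v|)
    (hstab : -(d - α) + G * |a| ≤ 0) :
    (-d * (u - v) + a * (g u - g v)) * (u - v) ≤ -α * (u - v) ^ 2 := by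
  have hnonlin : a * (g u - g v) * (u - v) ≤ G * |a| * (u - v) ^ 2 :=
    calc a * (g u - g v) * (u - v) ≤ |a| * |g u - g v| * |u - v| := by
          rw [← abs_mul, ← abs_mul]; exact le_abs_self _
      _ ≤ |a| * (G * |u - v|) * |u - v| := by gcongr
      _ = G * |a| * (u - v) ^ 2 := by rw [← sq_abs (u - v)]; ring
  nlinarith [mul_le_mul_of_nonneg_right hstab (sq_nonneg (u - v))]

def IsSolution (d a I g u : ℝ → ℝ) : Prop :=
  ∀ t, HasDerivAt u (-d t * u t + a t * g (u t) + I t) t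

variable {d a I g u v : ℝ → ℝ}

theorem IsSolution.abs_sub_le {G α : ℝ} (hu : IsSolution d a I g u) (hv : IsSolution d a I g v)
    (hg : ∀ p q, |g p - g q| ≤ G * |p - q|) (hstab : ∀ t, -(d t - α) + G * |a t| ≤ 0)
    {t : ℝ} (ht : 0 ≤ t) : |u t - v t| ≤ exp (-α * t) * |u 0 - v 0| :=
  abs_le_exp_mul_abs_of_deriv_mul_self_le (fun s => (hu s).sub (hv s)) (fun s => by
    convert field_sub_mul_sub_le (hg (u s) (v s)) (hstab s) using 1 <;> simp only [Pi.sub_apply]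
    ring) ht

theorem IsSolution.comp_add_period {ω : ℝ} (hd : Function.Periodic d ω)
    (ha : Function.Periodic a ω) (hI : Function.Periodic I ω) (hu : IsSolution d a I g u) :
    IsSolution d a I g (fun t => u (t + ω)) := fun t => by
  simpa [hd t, ha t, hI t] using (hu (t + ω)).comp_add_const t ω

end ScalarPeriodicODE

open ScalarPeriodicODE in
theorem stmt12_general (ω G α : ℝ) (d a I g : ℝ → ℝ) (x : ℝ → ℝ → ℝ)
    (hω : 0 < ω)
    (hdper : Function.Periodic d ω) (haper : Function.Periodic a ω)
    (hIper : Function.Periodic I ω)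
    (hg : ∀ p q, |g p - g q| ≤ G * |p - q|)
    (hα : 0 < α) (hstab : ∀ t, -(d t - α) + G * |a t| ≤ 0)
    (hflow0 : ∀ φ₀, x φ₀ 0 = φ₀)
    (hflow : ∀ φ₀ t, HasDerivAt (x φ₀)
      (-d t * x φ₀ t + a t * g (x φ₀ t) + I t) t)
    (huniq : ∀ (u : ℝ → ℝ),
      (∀ t, HasDerivAt u (-d t * u t + a t * g (u t) + I t) t) → u = x (u 0)) :
    (∀ p q : ℝ, |x p ω - x q ω| ≤ Real.exp (-α * ω) * |p - q|) ∧
    Real.exp (-α * ω) < 1 ∧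
    (∃! p : ℝ, x p ω = p) ∧
    ∀ p : ℝ, x p ω = p →
      Function.Periodic (x p) ω ∧
      ∀ φ₀, ∀ t ≥ (0 : ℝ), |x φ₀ t - x p t| ≤ Real.exp (-α * t) * |φ₀ - p| := by
  have hsol : ∀ p, IsSolution d a I g (x p) := hflow
  have hdecay : ∀ p q, ∀ t ≥ (0 : ℝ), |x p t - x q t| ≤ exp (-α * t) * |p - q| :=
    fun p q t ht => by simpa [hflow0] using (hsol p).abs_sub_le (hsol q) hg hstab ht
  have hlt : exp (-α * ω) < 1 := exp_lt_one_iff.mpr (by nlinarith)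
  have hcontr : ContractingWith ⟨exp (-α * ω), (exp_pos _).le⟩ (fun p => x p ω) :=
    ⟨hlt, LipschitzWith.of_dist_le_mul fun p q => hdecay p q ω hω.le⟩
  refine ⟨fun p q => hdecay p q ω hω.le, hlt,
    ⟨_, hcontr.fixedPoint_isFixedPt, fun _ => hcontr.fixedPoint_unique⟩,
    fun p hp => ⟨fun t => ?_, fun φ₀ t ht => hdecay φ₀ p t ht⟩⟩
  have hshift := huniq _ ((hsol p).comp_add_period hdper haper hIper)
  rw [zero_add, hp] at hshift
  exact congrFun hshift t

/-- the Poincaré (time-ω) map of the scalar periodic ODE is a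
contraction with constant e^{-αω} < 1; its unique fixed point generates the
unique ω-periodic solution, which attracts all solutions. -/
theorem stmt12 (ω G α : ℝ) (d a I g : ℝ → ℝ) (x : ℝ → ℝ → ℝ)
    (hω : 0 < ω) (hd : Continuous d) (ha : Continuous a) (hI : Continuous I)
    (hdper : Function.Periodic d ω) (haper : Function.Periodic a ω)
    (hIper : Function.Periodic I ω)
    (hdpos : ∀ t, 0 < d t)
    (hg : ∀ p q, |g p - g q| ≤ G * |p - q|)
    (hα : 0 < α) (hstab : ∀ t, -(d t - α) + G * |a t| ≤ 0)
    (hflow0 : ∀ φ₀, x φ₀ 0 = φ₀)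
    (hflow : ∀ φ₀ t, HasDerivAt (x φ₀)
      (-d t * x φ₀ t + a t * g (x φ₀ t) + I t) t)
    (huniq : ∀ (u : ℝ → ℝ),
      (∀ t, HasDerivAt u (-d t * u t + a t * g (u t) + I t) t) → u = x (u 0)) :
    (∀ p q : ℝ, |x p ω - x q ω| ≤ Real.exp (-α * ω) * |p - q|) ∧
    Real.exp (-α * ω) < 1 ∧
    (∃! p : ℝ, x p ω = p) ∧
    ∀ p : ℝ, x p ω = p →
      Function.Periodic (x p) ω ∧
      ∀ φ₀, ∀ t ≥ (0 : ℝ), |x φ₀ t - x p t| ≤ Real.exp (-α * t) * |φ₀ - p| :=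
  stmt12_general ω G α d a I g x hω hdper haper hIper hg hα hstab hflow0 hflow huniq
end

section
/- Let ξ_i > 0, and suppose continuous functions u_i : [t₀ - r, ∞) → ℝ satisfy, in the Dini derivative sense, D⁺|u_i(t)| ≤ -p_i(t)|u_i(t)| + Σ_j q_{ij}(t) sup_{s ∈ [t-r, t]} |u_j(s)| for t ≥ t₀, where p_i, q_{ij} ≥ 0 are continuous and -ξ_i p_i(t) + Σ_j ξ_j q_{ij}(t) ≤ -η < 0 for all i, t. Then ‖u(t)‖_ξ := max_i ξ_i^{-1}|u_i(t)| satisfies ‖u(t)‖_ξ ≤ max(sup_{s∈[t₀-r,t₀]} ‖u(s)‖_ξ, 0) for all t ≥ t₀, i.e., the weighted sup norm never exceeds its initial history supremum. -/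
/-!
Fix a level `M > max H 0`. By continuous induction the weighted components `ξᵢ⁻¹ |uᵢ|` stay
below `M`: at a time `T ≥ t₀` where they are all `≤ M` on `[t₀ - r, T]` and the `i`-th one
touches `M`, the history bound and the weighted diagonal dominance make the right-hand side of
the Dini inequality at most `-η M < 0`, so `|uᵢ|` drops strictly below its value just after `T`.
Letting `M` decrease to `max H 0` gives the claim.
-/

open Filter Finset in
/-- The upper right Dini derivative. -/
noncomputable def diniUpper (f : ℝ → ℝ) (t : ℝ) : ℝ :=
  limsup (fun h => (f (t + h) - f t) / h) (nhdsWithin 0 (Set.Ioi 0))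

open Filter Topology Set

theorem eventually_lt_of_diniUpper_neg {f : ℝ → ℝ} {t : ℝ} (h : diniUpper f t < 0) :
    ∀ᶠ s in 𝓝[>] t, f s < f t := by
  -- In `ℝ` an unbounded `limsup` is `0`, so a negative one is a genuine upper limit.
  have hbdd : IsBoundedUnder (· ≤ ·) (𝓝[>] 0) fun h => (f (t + h) - f t) / h := by
    by_contra hunb
    exact h.ne (Real.limsup_of_not_isBoundedUnder hunb)
  have hslope : ∀ᶠ h in 𝓝[>] (0 : ℝ), f (t + h) < f t := by
    filter_upwards [eventually_lt_of_limsup_lt h hbdd, self_mem_nhdsWithin] with h hneg hpos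
    exact sub_neg.1 (neg_of_div_neg_left hneg (le_of_lt hpos))
  have hshift : map (t + ·) (𝓝[>] 0) = 𝓝[>] t := by simp
  exact hshift ▸ eventually_map.2 hslope

theorem forall_le_of_eventually_lt_at_contact {ι : Type*} [Finite ι] {g : ι → ℝ → ℝ}
    {a t₀ M : ℝ} (hat : a ≤ t₀) (hg : ∀ i, ContinuousOn (g i) (Ici a))
    (hinit : ∀ s ∈ Icc a t₀, ∀ i, g i s ≤ M)
    (hcontact : ∀ T ≥ t₀, (∀ s ∈ Icc a T, ∀ j, g j s ≤ M) →
      ∀ i, g i T = M → ∀ᶠ s in 𝓝[>] T, g i s < M) :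
    ∀ t ≥ t₀, ∀ i, g i t ≤ M := by
  intro t ht
  set G := {s | ∀ i, g i s ≤ M}
  have hclosed : IsClosed (G ∩ Icc a t) := by
    have hcont : ContinuousOn (fun s i => g i s) (Icc a t) :=
      continuousOn_pi.2 fun i => (hg i).mono Icc_subset_Ici_self
    rw [inter_comm]
    convert hcont.preimage_isClosed_of_isClosed isClosed_Icc
      (isClosed_set_pi (i := univ) (s := fun _ => Iic M) fun _ _ => isClosed_Iic) using 2
    ext s
    simp [G, Pi.le_def]
  have hstep : ∀ T ∈ Ico a t, Icc a T ⊆ G → G ∈ 𝓝[>] T := by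
    intro T hT hbelow
    rcases lt_or_ge T t₀ with hT₀ | hT₀
    · exact mem_of_superset (Ioo_mem_nhdsGT hT₀) fun s hs =>
        hinit s ⟨hT.1.trans hs.1.le, hs.2.le⟩
    have hlt : ∀ i, ∀ᶠ s in 𝓝[>] T, g i s < M := by
      intro i
      rcases (hbelow ⟨hT.1, le_rfl⟩ i).lt_or_eq with hlt | heq
      · exact (((hg i) T hT.1).mono (Ioi_subset_Ici hT.1)).eventually_lt_const hlt
      · exact hcontact T hT₀ hbelow i heq
    filter_upwards [eventually_all.2 hlt] with s hs i using (hs i).le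
  exact hclosed.Icc_subset_of_forall_mem_nhdsGT_of_Icc_subset (hinit a ⟨le_rfl, hat⟩) hstep
    ⟨hat.trans ht, le_rfl⟩

theorem halanay_rhs_neg_of_dominance {ι : Type*} [Fintype ι] {ξ p S : ι → ℝ} {q : ι → ι → ℝ}
    {η M : ℝ}
    (hqpos : ∀ i j, 0 ≤ q i j) (hdom : ∀ i, -ξ i * p i + ∑ j, ξ j * q i j ≤ -η) (hη : 0 < η)
    (hM : 0 < M) (hS : ∀ j, S j ≤ ξ j * M) (i : ι) :
    -p i * (ξ i * M) + ∑ j, q i j * S j < 0 :=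
  calc -p i * (ξ i * M) + ∑ j, q i j * S j
      ≤ -p i * (ξ i * M) + ∑ j, q i j * (ξ j * M) := by
        gcongr with j
        exacts [hqpos i j, hS j]
    _ = M * (-ξ i * p i + ∑ j, ξ j * q i j) := by
        rw [mul_add, Finset.mul_sum]
        congr 1
        · ring
        · exact Finset.sum_congr rfl fun j _ => by ring
    _ ≤ M * -η := mul_le_mul_of_nonneg_left (hdom i) hM.le
    _ < 0 := mul_neg_of_pos_of_neg hM (neg_neg_of_pos hη)

theorem eventually_weighted_abs_lt_of_contact {ι : Type*} [Fintype ι] {ξ p : ι → ℝ}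
    {q : ι → ι → ℝ} {u : ι → ℝ → ℝ} {r η M T : ℝ} (hξ : ∀ i, 0 < ξ i)
    (hqpos : ∀ i j, 0 ≤ q i j) (hdom : ∀ i, -ξ i * p i + ∑ j, ξ j * q i j ≤ -η) (hη : 0 < η)
    (hM : 0 < M)
    (hdini : ∀ i, diniUpper (fun s => |u i s|) T ≤
      -p i * |u i T| + ∑ j, q i j * sSup ((fun s => |u j s|) '' Icc (T - r) T))
    (hbelow : ∀ s ∈ Icc (T - r) T, ∀ j, (ξ j)⁻¹ * |u j s| ≤ M)
    (i : ι) (hi : (ξ i)⁻¹ * |u i T| = M) :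
    ∀ᶠ s in 𝓝[>] T, (ξ i)⁻¹ * |u i s| < M := by
  have hsup : ∀ j, sSup ((fun s => |u j s|) '' Icc (T - r) T) ≤ ξ j * M := fun j =>
    Real.sSup_le (forall_mem_image.2 fun s hs => (inv_mul_le_iff₀ (hξ j)).1 (hbelow s hs j))
      (mul_nonneg (hξ j).le hM.le)
  have hui : |u i T| = ξ i * M := by rw [← hi, mul_inv_cancel_left₀ (hξ i).ne']
  have hneg : diniUpper (fun s => |u i s|) T < 0 :=
    (hdini i).trans_lt (hui ▸ halanay_rhs_neg_of_dominance hqpos hdom hη hM hsup i)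
  filter_upwards [eventually_lt_of_diniUpper_neg hneg] with s hs
  rw [← hi]
  exact mul_lt_mul_of_pos_left hs (inv_pos.2 (hξ i))

open Finset in
theorem stmt14_general (n : ℕ) (t₀ r η H : ℝ) (ξ : Fin n → ℝ)
    (p : Fin n → ℝ → ℝ) (q : Fin n → Fin n → ℝ → ℝ) (u : Fin n → ℝ → ℝ)
    (hr : 0 ≤ r) (hξ : ∀ i, 0 < ξ i)
    (hqpos : ∀ i j t, 0 ≤ q i j t)
    (hu : ∀ i, ContinuousOn (u i) (Set.Ici (t₀ - r)))
    (hη : 0 < η)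
    (hdom : ∀ i t, -ξ i * p i t + ∑ j, ξ j * q i j t ≤ -η)
    (hdini : ∀ i, ∀ t ≥ t₀, diniUpper (fun s => |u i s|) t ≤
      -p i t * |u i t| +
        ∑ j, q i j t * sSup ((fun s => |u j s|) '' Set.Icc (t - r) t))
    (hH : ∀ s ∈ Set.Icc (t₀ - r) t₀, ∀ i, (ξ i)⁻¹ * |u i s| ≤ H) :
    ∀ t ≥ t₀, ∀ i, (ξ i)⁻¹ * |u i t| ≤ max H 0 := by
  intro t ht i
  refine le_of_forall_gt_imp_ge_of_dense fun M hM => ?_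
  have hMpos : 0 < M := (le_max_right H 0).trans_lt hM
  have hinit : ∀ s ∈ Icc (t₀ - r) t₀, ∀ i, (ξ i)⁻¹ * |u i s| ≤ M := fun s hs i =>
    (hH s hs i).trans ((le_max_left H 0).trans hM.le)
  refine forall_le_of_eventually_lt_at_contact (g := fun i s => (ξ i)⁻¹ * |u i s|)
    (sub_le_self t₀ hr) (fun i => continuousOn_const.mul (hu i).abs) hinit ?_ t ht i
  intro T hT hbelow
  exact eventually_weighted_abs_lt_of_contact hξ (fun i j => hqpos i j T) (fun i => hdom i T) hη
    hMpos (fun i => hdini i T hT) fun s hs => hbelow s ⟨by linarith [hs.1], hs.2⟩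

open Finset in
/-- multidimensional Halanay-type inequality with weighted
diagonal dominance: the weighted sup norm never exceeds (the positive part of)
its initial history supremum. -/
theorem stmt14 (n : ℕ) (t₀ r η H : ℝ) (ξ : Fin n → ℝ)
    (p : Fin n → ℝ → ℝ) (q : Fin n → Fin n → ℝ → ℝ) (u : Fin n → ℝ → ℝ)
    (hr : 0 ≤ r) (hξ : ∀ i, 0 < ξ i)
    (hp : ∀ i, Continuous (p i)) (hq : ∀ i j, Continuous (q i j))
    (hppos : ∀ i t, 0 ≤ p i t) (hqpos : ∀ i j t, 0 ≤ q i j t)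
    (hu : ∀ i, ContinuousOn (u i) (Set.Ici (t₀ - r)))
    (hη : 0 < η)
    (hdom : ∀ i t, -ξ i * p i t + ∑ j, ξ j * q i j t ≤ -η)
    (hdini : ∀ i, ∀ t ≥ t₀, diniUpper (fun s => |u i s|) t ≤
      -p i t * |u i t| +
        ∑ j, q i j t * sSup ((fun s => |u j s|) '' Set.Icc (t - r) t))
    (hH : ∀ s ∈ Set.Icc (t₀ - r) t₀, ∀ i, (ξ i)⁻¹ * |u i s| ≤ H) :
    ∀ t ≥ t₀, ∀ i, (ξ i)⁻¹ * |u i t| ≤ max H 0 :=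
  stmt14_general n t₀ r η H ξ p q u hr hξ hqpos hu hη hdom hdini hH
end
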